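/- arXiv:2305.02571 — 5 statements merged into one kernel-verified Lean document; each statement's English description precedes it below -/
import Mathlib

section
/- For any set S and polynomial functors p, q, there is a natural bijection between coalgebra structures S → [q,p](S) on the carrier S and polynomial morphisms Sy ◁ q → p ◁ Sy, where [q,p] is the internal hom for the Dirichlet tensor product ⊗. -/
/-- A polynomial functor, given by a set of positions and, for each position, a set of
directions. -/
structure PolyF where
  pos : Type
  dir : pos → Type

/-- A morphism of polynomial functors (natural transformation), in positions/directions form. -/
structure PolyFHom (p q : PolyF) where
  onPos : p.pos → q.pos
  onDir : ∀ a, q.dir (onPos a) → p.dir a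

def PolyFHom.id (p : PolyF) : PolyFHom p p := ⟨fun a => a, fun _ d => d⟩

/-- Diagrammatic composition of morphisms of polynomials. -/
def PolyFHom.comp {p q r : PolyF} (f : PolyFHom p q) (g : PolyFHom q r) : PolyFHom p r :=
  ⟨fun a => g.onPos (f.onPos a), fun a d => f.onDir a (g.onDir (f.onPos a) d)⟩

/-- The identity polynomial `y`. -/
def yPoly : PolyF := ⟨PUnit, fun _ => PUnit⟩

/-- The linear polynomial `S·y`. -/
def lin (S : Type) : PolyF := ⟨S, fun _ => PUnit⟩

/-- The representable polynomial `y^T`. -/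
def rep (T : Type) : PolyF := ⟨PUnit, fun _ => T⟩

/-- The composition product `p ◁ q` of polynomials. -/
def polyComp (p q : PolyF) : PolyF :=
  ⟨Σ a : p.pos, p.dir a → q.pos, fun x => Σ i : p.dir x.1, q.dir (x.2 i)⟩

/-- The Dirichlet tensor product `p ⊗ q`. -/
def tens (p q : PolyF) : PolyF :=
  ⟨p.pos × q.pos, fun x => p.dir x.1 × q.dir x.2⟩

/-- Horizontal composition `f ◁ g` of polynomial morphisms. -/
def hcomp {p p' q q' : PolyF} (f : PolyFHom p p') (g : PolyFHom q q') :
    PolyFHom (polyComp p q) (polyComp p' q') :=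
  ⟨fun x => ⟨f.onPos x.1, fun i => g.onPos (x.2 (f.onDir x.1 i))⟩,
   fun x d => ⟨f.onDir x.1 d.1, g.onDir _ d.2⟩⟩

/-- The associator `(p ◁ q) ◁ r → p ◁ (q ◁ r)`. -/
def assocHom (p q r : PolyF) : PolyFHom (polyComp (polyComp p q) r) (polyComp p (polyComp q r)) :=
  ⟨fun x => ⟨x.1.1, fun i => ⟨x.1.2 i, fun j => x.2 ⟨i, j⟩⟩⟩,
   fun x d => ⟨⟨d.1, d.2.1⟩, d.2.2⟩⟩

/-- The inverse associator `p ◁ (q ◁ r) → (p ◁ q) ◁ r`. -/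
def assocInv (p q r : PolyF) : PolyFHom (polyComp p (polyComp q r)) (polyComp (polyComp p q) r) :=
  ⟨fun x => ⟨⟨x.1, fun i => (x.2 i).1⟩, fun ij => (x.2 ij.1).2 ij.2⟩,
   fun x d => ⟨d.1.1, d.1.2, d.2⟩⟩

/-- Left unitor `y ◁ p → p`. -/
def lunitor (p : PolyF) : PolyFHom (polyComp yPoly p) p :=
  ⟨fun x => x.2 PUnit.unit, fun _ d => ⟨PUnit.unit, d⟩⟩

/-- Right unitor `p ◁ y → p`. -/
def runitor (p : PolyF) : PolyFHom (polyComp p yPoly) p :=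
  ⟨fun x => x.1, fun _ d => ⟨d, PUnit.unit⟩⟩

/-- Inverse left unitor `p → y ◁ p`. -/
def lunitorInv (p : PolyF) : PolyFHom p (polyComp yPoly p) :=
  ⟨fun a => ⟨PUnit.unit, fun _ => a⟩, fun _ d => d.2⟩

/-- Inverse right unitor `p → p ◁ y`. -/
def runitorInv (p : PolyF) : PolyFHom p (polyComp p yPoly) :=
  ⟨fun a => ⟨a, fun _ => PUnit.unit⟩, fun _ d => d.1⟩

/-- A comonoid structure on a polynomial with respect to `(y, ◁)`. -/
structure ComonoidStruct (c : PolyF) where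
  counit : PolyFHom c yPoly
  comul : PolyFHom c (polyComp c c)
  counit_left : comul.comp ((hcomp counit (PolyFHom.id c)).comp (lunitor c)) = PolyFHom.id c
  counit_right : comul.comp ((hcomp (PolyFHom.id c) counit).comp (runitor c)) = PolyFHom.id c
  coassoc : comul.comp (hcomp (PolyFHom.id c) comul)
    = comul.comp ((hcomp comul (PolyFHom.id c)).comp (assocHom c c c))

/-- `f` is a comonoid homomorphism. -/
def IsComonHom {c d : PolyF} (mc : ComonoidStruct c) (md : ComonoidStruct d)
    (f : PolyFHom c d) : Prop :=
  f.comp md.counit = mc.counit ∧ f.comp md.comul = mc.comul.comp (hcomp f f)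

/-- A `(c,d)`-bicomodule. -/
structure Bicomod (c d : PolyF) (mc : ComonoidStruct c) (md : ComonoidStruct d) where
  carrier : PolyF
  coactL : PolyFHom carrier (polyComp c carrier)
  coactR : PolyFHom carrier (polyComp carrier d)
  counitL : coactL.comp ((hcomp mc.counit (PolyFHom.id carrier)).comp (lunitor carrier))
    = PolyFHom.id carrier
  coassocL : coactL.comp (hcomp (PolyFHom.id c) coactL)
    = coactL.comp ((hcomp mc.comul (PolyFHom.id carrier)).comp (assocHom c c carrier))
  counitR : coactR.comp ((hcomp (PolyFHom.id carrier) md.counit).comp (runitor carrier))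
    = PolyFHom.id carrier
  coassocR : coactR.comp (hcomp (PolyFHom.id carrier) md.comul)
    = coactR.comp ((hcomp coactR (PolyFHom.id d)).comp (assocHom carrier d d))
  compat : coactL.comp (hcomp (PolyFHom.id c) coactR)
    = coactR.comp ((hcomp coactL (PolyFHom.id d)).comp (assocHom c carrier d))

/-- A morphism of `(c,d)`-bicomodules. -/
structure BicomodHom {c d : PolyF} {mc : ComonoidStruct c} {md : ComonoidStruct d}
    (P Q : Bicomod c d mc md) where
  val : PolyFHom P.carrier Q.carrier
  commL : P.coactL.comp (hcomp (PolyFHom.id c) val) = val.comp Q.coactL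
  commR : P.coactR.comp (hcomp val (PolyFHom.id d)) = val.comp Q.coactR

/-- A witness that the bicomodule `B` is the composite `P ◁_d Q`, i.e. the equalizer of the
two canonical maps `P ◁ Q ⇉ P ◁ d ◁ Q`, compatibly with the coactions. -/
structure CompositeWitness {c d e : PolyF} {mc : ComonoidStruct c} {md : ComonoidStruct d}
    {me : ComonoidStruct e} (P : Bicomod c d mc md) (Q : Bicomod d e md me)
    (B : Bicomod c e mc me) where
  incl : PolyFHom B.carrier (polyComp P.carrier Q.carrier)
  equalizes : incl.comp ((hcomp P.coactR (PolyFHom.id Q.carrier)).comp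
      (assocHom P.carrier d Q.carrier))
    = incl.comp (hcomp (PolyFHom.id P.carrier) Q.coactL)
  lift : ∀ (X : PolyF) (h : PolyFHom X (polyComp P.carrier Q.carrier)),
    h.comp ((hcomp P.coactR (PolyFHom.id Q.carrier)).comp (assocHom P.carrier d Q.carrier))
      = h.comp (hcomp (PolyFHom.id P.carrier) Q.coactL) →
    ∃! l : PolyFHom X B.carrier, l.comp incl = h
  compatL : B.coactL.comp (hcomp (PolyFHom.id c) incl)
    = incl.comp ((hcomp P.coactL (PolyFHom.id Q.carrier)).comp (assocHom c P.carrier Q.carrier))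
  compatR : B.coactR.comp (hcomp incl (PolyFHom.id e))
    = incl.comp ((hcomp (PolyFHom.id P.carrier) Q.coactR).comp (assocInv P.carrier Q.carrier e))

/-- The identity bicomodule on a comonoid. -/
def idBicomod {c : PolyF} (mc : ComonoidStruct c) : Bicomod c c mc mc where
  carrier := c
  coactL := mc.comul
  coactR := mc.comul
  counitL := mc.counit_left
  coassocL := mc.coassoc
  counitR := mc.counit_right
  coassocR := mc.coassoc
  compat := mc.coassoc

/-- A monad on `c` in the bicategory of polynomial comonoids and bicomodules. -/
structure MonadOn {c : PolyF} {mc : ComonoidStruct c} (m : Bicomod c c mc mc) where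
  sq : Bicomod c c mc mc
  w : CompositeWitness m m sq
  unit : BicomodHom (idBicomod mc) m
  mul : BicomodHom sq m
  left_unit : ∀ L : PolyFHom m.carrier sq.carrier,
    L.comp w.incl = m.coactL.comp (hcomp unit.val (PolyFHom.id m.carrier)) →
    L.comp mul.val = PolyFHom.id m.carrier
  right_unit : ∀ L : PolyFHom m.carrier sq.carrier,
    L.comp w.incl = m.coactR.comp (hcomp (PolyFHom.id m.carrier) unit.val) →
    L.comp mul.val = PolyFHom.id m.carrier
  cube : Bicomod c c mc mc
  wc : CompositeWitness sq m cube
  cube' : Bicomod c c mc mc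
  wc' : CompositeWitness m sq cube'
  mul_assoc : ∀ (A : PolyFHom cube.carrier cube'.carrier)
      (L1 : PolyFHom cube.carrier sq.carrier) (L2 : PolyFHom cube'.carrier sq.carrier),
    A.comp (wc'.incl.comp (hcomp (PolyFHom.id m.carrier) w.incl))
      = wc.incl.comp ((hcomp w.incl (PolyFHom.id m.carrier)).comp
          (assocHom m.carrier m.carrier m.carrier)) →
    L1.comp w.incl = wc.incl.comp (hcomp mul.val (PolyFHom.id m.carrier)) →
    L2.comp w.incl = wc'.incl.comp (hcomp (PolyFHom.id m.carrier) mul.val) →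
    L1.comp mul.val = A.comp (L2.comp mul.val)

/-- A comonad on `d` in the bicategory of polynomial comonoids and bicomodules. -/
structure ComonadOn {d : PolyF} {md : ComonoidStruct d} (E : Bicomod d d md md) where
  sq : Bicomod d d md md
  w : CompositeWitness E E sq
  counit : BicomodHom E (idBicomod md)
  comul : BicomodHom E sq
  left_counit : comul.val.comp (w.incl.comp (hcomp counit.val (PolyFHom.id E.carrier)))
    = E.coactL
  right_counit : comul.val.comp (w.incl.comp (hcomp (PolyFHom.id E.carrier) counit.val))
    = E.coactR
  coassoc : comul.val.comp (w.incl.comp ((hcomp comul.val (PolyFHom.id E.carrier)).comp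
      ((hcomp w.incl (PolyFHom.id E.carrier)).comp
        (assocHom E.carrier E.carrier E.carrier))))
    = comul.val.comp (w.incl.comp ((hcomp (PolyFHom.id E.carrier) comul.val).comp
        (hcomp (PolyFHom.id E.carrier) w.incl)))

/-- A left module over a monad `m` in the bicategory of comonoids and bicomodules. -/
structure ModuleOn {c b : PolyF} {mc : ComonoidStruct c} {mb : ComonoidStruct b}
    (m : Bicomod c c mc mc) (M : MonadOn m) (A : Bicomod c b mc mb) where
  mA : Bicomod c b mc mb
  w : CompositeWitness m A mA
  act : BicomodHom mA A
  unit_law : ∀ L : PolyFHom A.carrier mA.carrier,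
    L.comp w.incl = A.coactL.comp (hcomp M.unit.val (PolyFHom.id A.carrier)) →
    L.comp act.val = PolyFHom.id A.carrier
  sqA : Bicomod c b mc mb
  wsq : CompositeWitness M.sq A sqA
  assoc_law : ∀ (L0 : PolyFHom sqA.carrier (polyComp m.carrier mA.carrier))
      (L1 L2 : PolyFHom sqA.carrier mA.carrier),
    L0.comp (hcomp (PolyFHom.id m.carrier) w.incl)
      = wsq.incl.comp ((hcomp M.w.incl (PolyFHom.id A.carrier)).comp
          (assocHom m.carrier m.carrier A.carrier)) →
    L1.comp w.incl = wsq.incl.comp (hcomp M.mul.val (PolyFHom.id A.carrier)) →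
    L2.comp w.incl = L0.comp (hcomp (PolyFHom.id m.carrier) act.val) →
    L1.comp act.val = L2.comp act.val

/-- A witness that `E` is the right coclosure `⟨p, q⟩`, i.e. that `− ◁_d q` applied to `E`
is couniversal among `(d,d)`-bicomodules receiving a map from `p`. -/
structure CoclosureWitness {d c : PolyF} {md : ComonoidStruct d} {mc : ComonoidStruct c}
    (p q : Bicomod d c md mc) (E : Bicomod d d md md) where
  cw : ∀ r : Bicomod d d md md, (B : Bicomod d c md mc) × CompositeWitness r q B
  equiv : ∀ r : Bicomod d d md md, BicomodHom E r ≃ BicomodHom p (cw r).1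
  natural : ∀ (r r' : Bicomod d d md md) (g : BicomodHom r r')
      (h : PolyFHom (cw r).1.carrier (cw r').1.carrier),
    h.comp (cw r').2.incl = (cw r).2.incl.comp (hcomp g.val (PolyFHom.id q.carrier)) →
    ∀ (f : BicomodHom E r) (fg : BicomodHom E r'), fg.val = f.val.comp g.val →
    ((equiv r') fg).val = ((equiv r) f).val.comp h

-- tests

/-- Evaluation of a polynomial functor at a set. -/
def pEval (p : PolyF) (X : Type) : Type := Σ a : p.pos, p.dir a → X

/-- The internal hom `[q,p]` for the Dirichlet tensor product. -/
def ihom (q p : PolyF) : PolyF :=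
  ⟨PolyFHom q p, fun φ => Σ I : q.pos, p.dir (φ.onPos I)⟩

/-- The canonical duoidal map `S·y ⊗ p → S·y ◁ p`. -/
def duoLin (S : Type) (p : PolyF) : PolyFHom (tens (lin S) p) (polyComp (lin S) p) :=
  ⟨fun x => ⟨x.1, fun _ => x.2⟩, fun _ d => (d.1, d.2)⟩

/-- The canonical duoidal map `p ⊗ y^T → p ◁ y^T`. -/
def duoRep (p : PolyF) (T : Type) : PolyFHom (tens p (rep T)) (polyComp p (rep T)) :=
  ⟨fun x => ⟨x.1, fun _ => PUnit.unit⟩, fun _ d => (d.1, d.2)⟩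

/-- A category structure with objects the positions of `c` and morphisms out of `C` the
directions `c.dir C`. -/
structure CatStruct (c : PolyF) where
  cod : ∀ {C : c.pos}, c.dir C → c.pos
  ident : ∀ C : c.pos, c.dir C
  compose : ∀ {C : c.pos} (f : c.dir C), c.dir (cod f) → c.dir C
  cod_ident : ∀ C : c.pos, cod (ident C) = C
  cod_compose : ∀ {C : c.pos} (f : c.dir C) (g : c.dir (cod f)),
    cod (compose f g) = cod g
  compose_ident_right : ∀ {C : c.pos} (f : c.dir C), compose f (ident (cod f)) = f
  compose_ident_left : ∀ {C : c.pos} (g : c.dir C),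
    compose (ident C) (cast (congrArg c.dir (cod_ident C)).symm g) = g
  compose_assoc : ∀ {C : c.pos} (f : c.dir C) (g : c.dir (cod f))
      (h : c.dir (cod (compose f g))),
    compose (compose f g) h = compose f (compose g (cast (congrArg c.dir (cod_compose f g)) h))

/-- Coproduct of polynomials. -/
def psum (p q : PolyF) : PolyF := ⟨Sum p.pos q.pos, Sum.elim p.dir q.dir⟩

def sumMap {p p' q q' : PolyF} (f : PolyFHom p p') (g : PolyFHom q q') :
    PolyFHom (psum p q) (psum p' q') where
  onPos := Sum.map f.onPos g.onPos
  onDir := fun x => match x with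
    | Sum.inl a => f.onDir a
    | Sum.inr b => g.onDir b

/-- The fold map `y + y → y`. -/
def foldY : PolyFHom (psum yPoly yPoly) yPoly where
  onPos := fun _ => PUnit.unit
  onDir := fun x => match x with
    | Sum.inl _ => fun u => u
    | Sum.inr _ => fun u => u

/-- The duoidal interchange `(p ◁ q) + (r ◁ s) → (p + r) ◁ (q + s)`. -/
def duoSum (p q r s : PolyF) :
    PolyFHom (psum (polyComp p q) (polyComp r s)) (polyComp (psum p r) (psum q s)) where
  onPos := fun x => match x with
    | Sum.inl y => ⟨Sum.inl y.1, fun i => Sum.inl (y.2 i)⟩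
    | Sum.inr y => ⟨Sum.inr y.1, fun i => Sum.inr (y.2 i)⟩
  onDir := fun x => match x with
    | Sum.inl _ => fun d => ⟨d.1, d.2⟩
    | Sum.inr _ => fun d => ⟨d.1, d.2⟩

def tensMap {p p' q q' : PolyF} (f : PolyFHom p p') (g : PolyFHom q q') :
    PolyFHom (tens p q) (tens p' q') :=
  ⟨fun x => (f.onPos x.1, g.onPos x.2), fun x d => (f.onDir x.1 d.1, g.onDir x.2 d.2)⟩

/-- The isomorphism `y ⊗ y → y`. -/
def tensUnitY : PolyFHom (tens yPoly yPoly) yPoly :=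
  ⟨fun _ => PUnit.unit, fun _ _ => (PUnit.unit, PUnit.unit)⟩

/-- The duoidal interchange `(p ◁ q) ⊗ (r ◁ s) → (p ⊗ r) ◁ (q ⊗ s)`. -/
def duoTens (p q r s : PolyF) :
    PolyFHom (tens (polyComp p q) (polyComp r s)) (polyComp (tens p r) (tens q s)) :=
  ⟨fun x => ⟨(x.1.1, x.2.1), fun ij => (x.1.2 ij.1, x.2.2 ij.2)⟩,
   fun _ d => (⟨d.1.1, d.2.1⟩, ⟨d.1.2, d.2.2⟩)⟩

/-- Binary product of polynomials. -/
def pprod (p q : PolyF) : PolyF := ⟨p.pos × q.pos, fun x => Sum (p.dir x.1) (q.dir x.2)⟩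

def prodMap {p p' q q' : PolyF} (f : PolyFHom p p') (g : PolyFHom q q') :
    PolyFHom (pprod p q) (pprod p' q') :=
  ⟨fun x => (f.onPos x.1, g.onPos x.2),
   fun x d => Sum.elim (fun a => Sum.inl (f.onDir x.1 a)) (fun b => Sum.inr (g.onDir x.2 b)) d⟩

/-- The tower `p⁽⁰⁾ = y`, `p⁽ⁿ⁺¹⁾ = y × (p ◁ p⁽ⁿ⁾)`. -/
def iter (p : PolyF) : ℕ → PolyF
  | 0 => yPoly
  | n+1 => pprod yPoly (polyComp p (iter p n))

/-- The projections `p⁽ⁿ⁺¹⁾ → p⁽ⁿ⁾`. -/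
def projIter (p : PolyF) : ∀ n : ℕ, PolyFHom (iter p (n+1)) (iter p n)
  | 0 => ⟨fun _ => PUnit.unit, fun _ _ => Sum.inl PUnit.unit⟩
  | n+1 => prodMap (PolyFHom.id yPoly) (hcomp (PolyFHom.id p) (projIter p n))

/-- The carrier of the cofree comonoid on `p`: the limit of the tower `p⁽ⁿ⁾`,
with directions the colimit of the direction sets along the tower. -/
def cofreeP (p : PolyF) : PolyF where
  pos := {f : ∀ n : ℕ, (iter p n).pos // ∀ n : ℕ, (projIter p n).onPos (f (n+1)) = f n}
  dir := fun f => Quot (fun x y : Σ n : ℕ, (iter p n).dir (f.1 n) =>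
    y = ⟨x.1 + 1, (projIter p x.1).onDir (f.1 (x.1+1))
      (cast (congrArg (iter p x.1).dir (f.2 x.1).symm) x.2)⟩)

/-- The projection `c⁀p → y` onto `p⁽⁰⁾`. -/
def projZero (p : PolyF) : PolyFHom (cofreeP p) yPoly :=
  ⟨fun _ => PUnit.unit, fun f _ => Quot.mk _ ⟨0, PUnit.unit⟩⟩

/-- The projection `c⁀p → p`, via `p⁽¹⁾ = y × (p ◁ y) → p`. -/
def projP (p : PolyF) : PolyFHom (cofreeP p) p :=
  ⟨fun f => ((f.1 1).2).1, fun f d => Quot.mk _ ⟨1, Sum.inr ⟨d, PUnit.unit⟩⟩⟩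

/-- The effects-handler axioms for `φ : s ◁ d → c ◁ s`. -/
def IsHandler {c d : PolyF} (mc : ComonoidStruct c) (md : ComonoidStruct d) (s : PolyF)
    (φ : PolyFHom (polyComp s d) (polyComp c s)) : Prop :=
  φ.comp ((hcomp mc.counit (PolyFHom.id s)).comp (lunitor s))
    = (hcomp (PolyFHom.id s) md.counit).comp (runitor s)
  ∧ (hcomp (PolyFHom.id s) md.comul).comp ((assocInv s d d).comp
      ((hcomp φ (PolyFHom.id d)).comp ((assocHom c s d).comp (hcomp (PolyFHom.id c) φ))))
    = φ.comp ((hcomp mc.comul (PolyFHom.id s)).comp (assocHom c c s))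

/-- The left coaction `s ◁ d → c ◁ (s ◁ d)` induced by an effects handler `φ`. -/
def handlerCoactL {c d : PolyF} (md : ComonoidStruct d) (s : PolyF)
    (φ : PolyFHom (polyComp s d) (polyComp c s)) :
    PolyFHom (polyComp s d) (polyComp c (polyComp s d)) :=
  (hcomp (PolyFHom.id s) md.comul).comp ((assocInv s d d).comp
    ((hcomp φ (PolyFHom.id d)).comp (assocHom c s d)))

/-- The right coaction `s ◁ d → (s ◁ d) ◁ d` induced by comultiplication. -/
def handlerCoactR {d : PolyF} (md : ComonoidStruct d) (s : PolyF) :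
    PolyFHom (polyComp s d) (polyComp (polyComp s d) d) :=
  (hcomp (PolyFHom.id s) md.comul).comp (assocInv s d d)

/-- A witness that `B` is the equalizer of the two canonical maps `p ◁ q ⇉ p ◁ dm ◁ q`
determined by a right coaction on `p` and a left coaction on `q`. -/
structure EqualizerWitness {p dm q : PolyF} (ρ : PolyFHom p (polyComp p dm))
    (lam : PolyFHom q (polyComp dm q)) (B : PolyF) where
  incl : PolyFHom B (polyComp p q)
  equalizes : incl.comp ((hcomp ρ (PolyFHom.id q)).comp (assocHom p dm q))
    = incl.comp (hcomp (PolyFHom.id p) lam)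
  lift : ∀ (X : PolyF) (h : PolyFHom X (polyComp p q)),
    h.comp ((hcomp ρ (PolyFHom.id q)).comp (assocHom p dm q))
      = h.comp (hcomp (PolyFHom.id p) lam) →
    ∃! l : PolyFHom X B, l.comp incl = h

/-- The discrete comonoid (discrete category) on a set `A`. -/
def discreteComon (A : Type) : ComonoidStruct (lin A) where
  counit := ⟨fun _ => PUnit.unit, fun _ _ => PUnit.unit⟩
  comul := ⟨fun a => ⟨a, fun _ => a⟩, fun _ _ => PUnit.unit⟩
  counit_left := rfl
  counit_right := rfl
  coassoc := rfl

/-- The bicomodule between discrete comonoids given by a span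
`A ← (total space of P) → P.pos → A`. -/
def spanBicomod (A : Type) (P : PolyF) (f : P.pos → A) (g : ∀ x, P.dir x → A) :
    Bicomod (lin A) (lin A) (discreteComon A) (discreteComon A) where
  carrier := P
  coactL := ⟨fun x => ⟨f x, fun _ => x⟩, fun _ d => d.2⟩
  coactR := ⟨fun x => ⟨x, fun i => g x i⟩, fun _ d => d.1⟩
  counitL := rfl
  coassocL := rfl
  counitR := rfl
  coassocR := rfl
  compat := rfl


/-- For a set `S` and polynomials `p, q`, coalgebra structures
`S → [q,p](S)` correspond bijectively to polynomial morphisms `Sy ◁ q → p ◁ Sy`,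
where `[q,p]` is the internal hom for the Dirichlet tensor product. -/
theorem coalgebra_effects_bijection (S : Type) (p q : PolyF) :
    Nonempty ((S → pEval (ihom q p) S)
      ≃ PolyFHom (polyComp (lin S) q) (polyComp p (lin S))) := by
  refine ⟨{
    toFun := fun c => {
      onPos := fun x => ⟨(c x.1).1.onPos (x.2 PUnit.unit),
        fun i => (c x.1).2 ⟨x.2 PUnit.unit, i⟩⟩
      onDir := fun x d => ⟨PUnit.unit, (c x.1).1.onDir (x.2 PUnit.unit) d.1⟩ }
    invFun := fun m s =>
      ⟨⟨fun I => (m.onPos ⟨s, fun _ => I⟩).1,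
        fun I e => (m.onDir ⟨s, fun _ => I⟩ ⟨e, PUnit.unit⟩).2⟩,
       fun d => (m.onPos ⟨s, fun _ => d.1⟩).2 d.2⟩
    left_inv := fun c => rfl
    right_inv := fun m => by
      have h1 : ∀ x : (polyComp (lin S) q).pos, x = ⟨x.1, fun _ => x.2 PUnit.unit⟩ := by
        rintro ⟨s, f⟩
        have : (fun _ : (lin S).dir s => f PUnit.unit) = f := funext fun u => by cases u; rfl
        rw [this]
      cases m with
      | mk op od =>
        congr 1 }⟩
end

section
/- The cofree comonoid construction p ↦ c⁀p extends to a functor Poly → Comon(Poly,◁) that is right adjoint to the forgetful functor U: Comon(Poly,◁) → Poly; the counit c⁀p → p is the composite of the projection c⁀p → p⁽¹⁾ = y × p with the second product projection, and the unit c → c⁀c of a comonoid (c, ε, δ) is built from the iterated comultiplication maps c → c⁽ⁱ⁾. -/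
/-!
A position of `c⁀p` is a `p`-tree, given by its compatible truncations to every depth, and a
direction is a finite path from the root. The comultiplication sends a tree to itself together
with the subtree at the end of each path, and acts on directions by concatenating paths; the
comonoid laws are the unit and associativity laws of concatenation, checked one truncation
level at a time, since a map into `c⁀p` or into `c⁀p ◁ q` is determined by its truncations.

For a comonoid `(c, ε, δ)` and `f : c → p`, level `n + 1` of the induced map is `ε` paired with
`δ ; (f ◁ level n)`, so level `n` factors through the iterated comultiplication. Coassociativity
of `δ` makes the resulting map `c → c⁀p` preserve comultiplication: the subtree at a path
of the unfolded tree of `a` is the unfolded tree at the codomain of the corresponding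
morphism out of `a`. Conversely, a comonoid map `g` with `g ; π = f` satisfies the same
recursion level by level, so it is the unfolded map.
-/

theorem PolyFHom.ext_heq {q r : PolyF} {f g : PolyFHom q r}
    (hPos : ∀ a, f.onPos a = g.onPos a)
    (hDir : ∀ a d d', HEq d d' → f.onDir a d = g.onDir a d') : f = g := by
  obtain ⟨fP, fD⟩ := f; obtain ⟨gP, gD⟩ := g
  obtain rfl : fP = gP := funext hPos
  simp only [PolyFHom.mk.injEq, heq_eq_eq, true_and]
  funext a d
  exact hDir a d d HEq.rfl

theorem PolyFHom.congr_onPos {q r : PolyF} {f g : PolyFHom q r} (h : f = g) (a : q.pos) :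
    f.onPos a = g.onPos a := by rw [h]

theorem PolyFHom.congr_onDir {q r : PolyF} {f g : PolyFHom q r} (h : f = g) (a : q.pos)
    {d : r.dir (f.onPos a)} {d' : r.dir (g.onPos a)} (hd : HEq d d') :
    f.onDir a d = g.onDir a d' := by subst h; cases hd; rfl

theorem hcomp_comp_hcomp {p₁ p₂ p₃ q₁ q₂ q₃ : PolyF}
    (a : PolyFHom p₁ p₂) (a' : PolyFHom p₂ p₃) (b : PolyFHom q₁ q₂) (b' : PolyFHom q₂ q₃) :
    (hcomp a b).comp (hcomp a' b') = hcomp (a.comp a') (b.comp b') := rfl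

theorem hcongr_dep {A : Type} {B C : A → Type} (f : ∀ a, B a → C a)
    {a a' : A} (h : a = a') {b : B a} {b' : B a'} (hb : HEq b b') :
    HEq (f a b) (f a' b') := by subst h; cases hb; rfl

theorem hcongr_app {α α' β β' : Type} (hα : α = α') (hβ : β = β')
    {f : α → β} {g : α' → β'} (hf : HEq f g) {x : α} {x' : α'} (hx : HEq x x') :
    HEq (f x) (g x') := by subst hα; subst hβ; cases hf; cases hx; rfl

theorem Sigma.snd_apply_eq_of_eq {I X : Type} {B : I → Type} {a a' : I}
    {T : B a → X} {T' : B a' → X} (h : (⟨a, T⟩ : Σ a : I, B a → X) = ⟨a', T'⟩)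
    (i : B a) (i' : B a') (hi : HEq i i') : T i = T' i' := by
  obtain ⟨rfl, hT⟩ := Sigma.mk.inj h
  cases hT; cases hi; rfl

theorem Sigma.mk_reindex {I X : Type} {B : I → Type} {a a' : I} (h : a' = a) (T : B a → X) :
    (⟨a, T⟩ : Σ i, B i → X) = ⟨a', fun i => T (cast (congrArg B h) i)⟩ := by
  subst h; rfl

def pprodLift {X A B : PolyF} (u : PolyFHom X A) (v : PolyFHom X B) : PolyFHom X (pprod A B) :=
  ⟨fun x => (u.onPos x, v.onPos x), fun x d => Sum.elim (u.onDir x) (v.onDir x) d⟩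

theorem pprodLift_comp_prodMap {X A B A' B' : PolyF} (u : PolyFHom X A) (v : PolyFHom X B)
    (s : PolyFHom A A') (t : PolyFHom B B') :
    (pprodLift u v).comp (prodMap s t) = pprodLift (u.comp s) (v.comp t) := by
  refine PolyFHom.ext_heq (fun _ => rfl) fun _ d _ hd => ?_
  cases hd
  cases d <;> rfl

theorem comp_pprodLift {X Y A B : PolyF} (w : PolyFHom X Y) (u : PolyFHom Y A)
    (v : PolyFHom Y B) : w.comp (pprodLift u v) = pprodLift (w.comp u) (w.comp v) := by
  refine PolyFHom.ext_heq (fun _ => rfl) fun _ d _ hd => ?_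
  cases hd
  cases d <;> rfl

theorem polyComp_dir_heq_iff {q r : PolyF} {x y : (polyComp q r).pos} (h : x = y)
    (d : (polyComp q r).dir x) (d' : (polyComp q r).dir y) :
    HEq d d' ↔ HEq d.1 d'.1 ∧ HEq d.2 d'.2 := by
  subst h
  refine ⟨fun hd => ?_, fun ⟨h₁, h₂⟩ => heq_of_eq (Sigma.ext (eq_of_heq h₁) h₂)⟩
  cases hd
  exact ⟨HEq.rfl, HEq.rfl⟩

section CofreeTower

variable {p : PolyF}

theorem iter_cast_inl {n : ℕ} {x y : (iter p (n+1)).pos} (h : x = y)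
    (h' : (iter p (n+1)).dir x = (iter p (n+1)).dir y) (u : PUnit) :
    cast h' (Sum.inl u : (iter p (n+1)).dir x) = Sum.inl u := by
  subst h; rfl

theorem iter_cast_inr {n : ℕ} {x y : (iter p (n+1)).pos} (h : x = y)
    (h' : (iter p (n+1)).dir x = (iter p (n+1)).dir y)
    (i : p.dir x.2.1) (d : (iter p n).dir (x.2.2 i))
    (hd : (iter p n).dir (x.2.2 i) =
      (iter p n).dir (y.2.2 (cast (congrArg (fun z => p.dir z.2.1) h) i))) :
    cast h' (Sum.inr ⟨i, d⟩ : (iter p (n+1)).dir x) =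
      Sum.inr ⟨cast (congrArg (fun z => p.dir z.2.1) h) i, cast hd d⟩ := by
  subst h; rfl

theorem iter_succ_dir_heq_inl {n : ℕ} {x y : (iter p (n+1)).pos} (h : x = y) {u : PUnit}
    {d : (iter p (n+1)).dir y} (hd : HEq (Sum.inl u : (iter p (n+1)).dir x) d) :
    d = Sum.inl PUnit.unit := by
  subst h; cases hd; rfl

theorem iter_succ_dir_heq_inr {n : ℕ} {x y : (iter p (n+1)).pos} (h : x = y)
    {i : p.dir x.2.1} {j : (iter p n).dir (x.2.2 i)} {d : (iter p (n+1)).dir y}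
    (hd : HEq (Sum.inr ⟨i, j⟩ : (iter p (n+1)).dir x) d) :
    ∃ i' j', d = (Sum.inr ⟨i', j'⟩ : (iter p (n+1)).dir y) ∧ HEq i i' ∧ HEq j j' := by
  subst h; cases hd; exact ⟨i, j, rfl, HEq.rfl, HEq.rfl⟩

def level (p : PolyF) (n : ℕ) : PolyFHom (cofreeP p) (iter p n) :=
  ⟨fun F => F.1 n, fun _ d => Quot.mk _ ⟨n, d⟩⟩

theorem cofree_root_eq (F : (cofreeP p).pos) : ∀ n : ℕ, ((F.1 (n+1)).2.1 : p.pos) = (F.1 1).2.1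
  | 0 => rfl
  | n+1 => (congrArg (fun z : (iter p (n+1)).pos => z.2.1) (F.2 (n+1))).trans (cofree_root_eq F n)

theorem cofree_root_eq_root (F : (cofreeP p).pos) (n m : ℕ) :
    ((F.1 (n+1)).2.1 : p.pos) = (F.1 (m+1)).2.1 :=
  (cofree_root_eq F n).trans (cofree_root_eq F m).symm

/-- The branch of `F` at the root direction `i`, the root being read off at level `n₀ + 1`. -/
def branch (F : (cofreeP p).pos) (n₀ : ℕ) (i : p.dir ((F.1 (n₀+1)).2.1)) : (cofreeP p).pos :=
  ⟨fun n => (F.1 (n+1)).2.2 (cast (congrArg p.dir (cofree_root_eq_root F n₀ n)) i), fun n =>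
    Sigma.snd_apply_eq_of_eq (congrArg (fun z : (iter p (n+1)).pos => z.2) (F.2 (n+1))) _ _
      ((cast_heq _ _).trans (cast_heq _ _).symm)⟩

theorem branch_reindex (F : (cofreeP p).pos) (n₀ n₁ : ℕ) (i : p.dir ((F.1 (n₀+1)).2.1)) :
    branch F n₁ (cast (congrArg p.dir (cofree_root_eq_root F n₀ n₁)) i) = branch F n₀ i := by
  apply Subtype.ext; funext k
  exact congrArg ((F.1 (k+1)).2.2)
    (eq_of_heq ((cast_heq _ _).trans ((cast_heq _ _).trans (cast_heq _ _).symm)))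

/-- A level-`n` direction seen at level `n + 1`, through `projIter`; the directions of `c⁀p` are
identified along these maps. -/
def liftDir (F : (cofreeP p).pos) (n : ℕ) (d : (iter p n).dir (F.1 n)) :
    (iter p (n+1)).dir (F.1 (n+1)) :=
  (projIter p n).onDir (F.1 (n+1)) (cast (congrArg (iter p n).dir (F.2 n).symm) d)

theorem level_onDir_liftDir (F : (cofreeP p).pos) (n : ℕ) (d : (iter p n).dir (F.1 n)) :
    (level p n).onDir F d = (level p (n+1)).onDir F (liftDir F n d) :=
  Quot.sound rfl

theorem liftDir_inl (F : (cofreeP p).pos) (n : ℕ) (u : PUnit) :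
    liftDir F (n+1) (Sum.inl u) = Sum.inl u := by
  unfold liftDir
  rw [iter_cast_inl (F.2 (n+1)).symm]
  rfl

theorem liftDir_inr (F : (cofreeP p).pos) (n : ℕ) (i : p.dir ((F.1 (n+1)).2.1))
    (j : (iter p n).dir ((F.1 (n+1)).2.2 i)) :
    liftDir F (n+1) (Sum.inr ⟨i, j⟩) =
      Sum.inr ⟨cast (congrArg p.dir (cofree_root_eq_root F n (n+1))) i,
        liftDir (branch F n i) n j⟩ := by
  unfold liftDir
  rw [iter_cast_inr (F.2 (n+1)).symm _ i j
    (congrArg (iter p n).dir ((branch F n i).2 n).symm)]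
  rfl

/-- Prepending the root direction `i` to a direction of the branch at `i`. -/
def consDir (F : (cofreeP p).pos) (n₀ : ℕ) (i : p.dir ((F.1 (n₀+1)).2.1)) :
    (cofreeP p).dir (branch F n₀ i) → (cofreeP p).dir F :=
  Quot.lift
    (fun x => (level p (x.1+1)).onDir F
      (Sum.inr ⟨cast (congrArg p.dir (cofree_root_eq_root F n₀ x.1)) i, x.2⟩))
    (by
      rintro ⟨m, d⟩ _ rfl
      show (level p (m+1)).onDir F (Sum.inr ⟨_, d⟩)
        = (level p (m+2)).onDir F (Sum.inr ⟨_, liftDir (branch F n₀ i) m d⟩)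
      refine (level_onDir_liftDir F (m+1) _).trans (congrArg _ ((liftDir_inr F m _ d).trans ?_))
      refine congrArg Sum.inr (Sigma.ext (cast_cast _ _ _) ?_)
      exact hcongr_dep (fun B (w : (iter p m).dir (B.1 m)) => liftDir B m w)
        (branch_reindex F n₀ m i) HEq.rfl)

theorem cast_level_onDir {B B' : (cofreeP p).pos} (h : B = B')
    (h' : (cofreeP p).dir B = (cofreeP p).dir B') (m : ℕ) (w : (iter p m).dir (B.1 m)) :
    cast h' ((level p m).onDir B w) =
      (level p m).onDir B'
        (cast (congrArg (fun X : (cofreeP p).pos => (iter p m).dir (X.1 m)) h) w) := by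
  subst h; rfl

theorem consDir_reindex (F : (cofreeP p).pos) (n₀ n₁ : ℕ) (i : p.dir ((F.1 (n₀+1)).2.1))
    {z : (cofreeP p).dir (branch F n₁ (cast (congrArg p.dir (cofree_root_eq_root F n₀ n₁)) i))}
    {z' : (cofreeP p).dir (branch F n₀ i)} (hz : HEq z z') :
    consDir F n₁ (cast (congrArg p.dir (cofree_root_eq_root F n₀ n₁)) i) z = consDir F n₀ i z' := by
  have hB := branch_reindex F n₀ n₁ i
  obtain rfl : cast (congrArg (fun B => (cofreeP p).dir B) hB.symm) z' = z :=
    cast_eq_iff_heq.mpr hz.symm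
  clear hz
  induction z' using Quot.ind with
  | _ y =>
    obtain ⟨m, w⟩ := y
    rw [show (Quot.mk _ ⟨m, w⟩ : (cofreeP p).dir (branch F n₀ i))
        = (level p m).onDir (branch F n₀ i) w from rfl, cast_level_onDir hB.symm]
    show (level p (m+1)).onDir F (Sum.inr ⟨_, cast _ w⟩)
      = (level p (m+1)).onDir F (Sum.inr ⟨_, w⟩)
    exact congrArg _ (congrArg Sum.inr (Sigma.ext (cast_cast _ _ _) (cast_heq _ _)))

end CofreeTower

section CofreeComonoid

variable {p : PolyF}

/-- The subtree of `F` at the end of a level-`n` direction (a path of length at most `n`). -/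
def subtreeAt : ∀ (n : ℕ) (F : (cofreeP p).pos), (iter p n).dir (F.1 n) → (cofreeP p).pos
  | 0, F, _ => F
  | _+1, F, Sum.inl _ => F
  | n+1, F, Sum.inr ⟨i, j⟩ => subtreeAt n (branch F n i) j

def graftAt : ∀ (n : ℕ) (F : (cofreeP p).pos) (d : (iter p n).dir (F.1 n)),
    (cofreeP p).dir (subtreeAt n F d) → (cofreeP p).dir F
  | 0, _, _ => id
  | _+1, _, Sum.inl _ => id
  | n+1, F, Sum.inr ⟨i, j⟩ => fun e => consDir F n i (graftAt n (branch F n i) j e)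

theorem subtreeAt_congr (n : ℕ) {B B' : (cofreeP p).pos} (h : B = B')
    {d : (iter p n).dir (B.1 n)} {d' : (iter p n).dir (B'.1 n)} (hd : HEq d d') :
    subtreeAt n B d = subtreeAt n B' d' := by subst h; cases hd; rfl

theorem graftAt_congr (n : ℕ) {B B' : (cofreeP p).pos} (h : B = B')
    {d : (iter p n).dir (B.1 n)} {d' : (iter p n).dir (B'.1 n)} (hd : HEq d d') :
    HEq (graftAt n B d) (graftAt n B' d') := by subst h; cases hd; rfl

theorem subtreeAt_liftDir : ∀ (n : ℕ) (F : (cofreeP p).pos) (d : (iter p n).dir (F.1 n)),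
    subtreeAt (n+1) F (liftDir F n d) = subtreeAt n F d
  | 0, _, _ => rfl
  | n+1, F, Sum.inl u => by erw [liftDir_inl]; rfl
  | n+1, F, Sum.inr ⟨i, j⟩ => by
      rw [liftDir_inr]
      exact (subtreeAt_congr (n+1) (branch_reindex F n (n+1) i) HEq.rfl).trans
        (subtreeAt_liftDir n (branch F n i) j)

theorem graftAt_liftDir : ∀ (n : ℕ) (F : (cofreeP p).pos) (d : (iter p n).dir (F.1 n)),
    HEq (graftAt (n+1) F (liftDir F n d)) (graftAt n F d)
  | 0, _, _ => HEq.rfl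
  | n+1, F, Sum.inl u => by erw [liftDir_inl]; exact HEq.rfl
  | n+1, F, Sum.inr ⟨i, j⟩ => by
      rw [liftDir_inr]
      have hB := branch_reindex F n (n+1) i
      have hsub := congrArg (cofreeP p).dir
        ((subtreeAt_congr (n+1) hB HEq.rfl).trans (subtreeAt_liftDir n (branch F n i) j))
      have ih : HEq (graftAt (n+1) (branch F (n+1) _) (liftDir (branch F n i) n j))
          (graftAt n (branch F n i) j) :=
        (graftAt_congr (n+1) hB HEq.rfl).trans (graftAt_liftDir n (branch F n i) j)
      refine Function.hfunext hsub fun e e' he => heq_of_eq (consDir_reindex F n (n+1) i ?_)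
      exact hcongr_app hsub (congrArg (cofreeP p).dir hB) ih he

def subtree (F : (cofreeP p).pos) : (cofreeP p).dir F → (cofreeP p).pos :=
  Quot.lift (fun x => subtreeAt x.1 F x.2)
    (by rintro ⟨n, d⟩ _ rfl; exact (subtreeAt_liftDir n F d).symm)

def graft (F : (cofreeP p).pos) (e : (cofreeP p).dir F) :
    (cofreeP p).dir (subtree F e) → (cofreeP p).dir F :=
  Quot.hrecOn (motive := fun e => (cofreeP p).dir (subtree F e) → (cofreeP p).dir F)
    e (fun x => graftAt x.1 F x.2)
    (by rintro ⟨n, d⟩ _ rfl; exact (graftAt_liftDir n F d).symm)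

def splitAt (p : PolyF) (m : ℕ) : PolyFHom (cofreeP p) (polyComp (iter p m) (cofreeP p)) :=
  ⟨fun F => ⟨F.1 m, subtreeAt m F⟩, fun F dd => graftAt m F dd.1 dd.2⟩

def cofreeComul (p : PolyF) : PolyFHom (cofreeP p) (polyComp (cofreeP p) (cofreeP p)) :=
  ⟨fun F => ⟨F, subtree F⟩, fun F dd => graft F dd.1 dd.2⟩

/-- The empty path, at every level. -/
def rootDir : ∀ (n : ℕ) (x : (iter p n).pos), (iter p n).dir x
  | 0, _ => PUnit.unit
  | _+1, _ => Sum.inl PUnit.unit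

theorem level_onDir_rootDir (F : (cofreeP p).pos) : ∀ n : ℕ,
    (level p n).onDir F (rootDir n (F.1 n)) = (level p 0).onDir F PUnit.unit
  | 0 => rfl
  | n+1 => by
      rw [← level_onDir_rootDir F n, level_onDir_liftDir F n]
      cases n with
      | zero => rfl
      | succ k => exact congrArg _ (liftDir_inl F k PUnit.unit).symm

theorem graftAt_root : ∀ (n : ℕ) (F : (cofreeP p).pos) (d : (iter p n).dir (F.1 n)),
    graftAt n F d ((level p 0).onDir (subtreeAt n F d) PUnit.unit) = (level p n).onDir F d
  | 0, _, _ => rfl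
  | n+1, F, Sum.inl _ => (level_onDir_rootDir F (n+1)).symm
  | n+1, F, Sum.inr ⟨i, j⟩ => congrArg (consDir F n i) (graftAt_root n (branch F n i) j)

theorem subtree_consDir (F : (cofreeP p).pos) (n₀ : ℕ) (i : p.dir ((F.1 (n₀+1)).2.1))
    (x : (cofreeP p).dir (branch F n₀ i)) :
    subtree F (consDir F n₀ i x) = subtree (branch F n₀ i) x := by
  induction x using Quot.ind with
  | _ y => exact subtreeAt_congr y.1 (branch_reindex F n₀ y.1 i) HEq.rfl

theorem subtree_graftAt : ∀ (n : ℕ) (F : (cofreeP p).pos) (d : (iter p n).dir (F.1 n))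
    (e : (cofreeP p).dir (subtreeAt n F d)),
    subtree F (graftAt n F d e) = subtree (subtreeAt n F d) e
  | 0, _, _, _ => rfl
  | _+1, _, Sum.inl _, _ => rfl
  | n+1, F, Sum.inr ⟨i, j⟩, e =>
      (subtree_consDir F n i _).trans (subtree_graftAt n (branch F n i) j e)

theorem graft_consDir (F : (cofreeP p).pos) (n₀ : ℕ) (i : p.dir ((F.1 (n₀+1)).2.1))
    (x : (cofreeP p).dir (branch F n₀ i))
    {w : (cofreeP p).dir (subtree F (consDir F n₀ i x))}
    {w' : (cofreeP p).dir (subtree (branch F n₀ i) x)} (hw : HEq w w') :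
    graft F (consDir F n₀ i x) w = consDir F n₀ i (graft (branch F n₀ i) x w') := by
  induction x using Quot.ind with
  | _ y =>
    refine consDir_reindex F n₀ y.1 i ?_
    exact hcongr_app
      (congrArg (cofreeP p).dir (subtreeAt_congr y.1 (branch_reindex F n₀ y.1 i) HEq.rfl))
      (congrArg (cofreeP p).dir (branch_reindex F n₀ y.1 i))
      (graftAt_congr y.1 (branch_reindex F n₀ y.1 i) HEq.rfl) hw

theorem graftAt_graft : ∀ (n : ℕ) (F : (cofreeP p).pos) (d : (iter p n).dir (F.1 n))
    (e : (cofreeP p).dir (subtreeAt n F d))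
    {w : (cofreeP p).dir (subtree (subtreeAt n F d) e)}
    {w' : (cofreeP p).dir (subtree F (graftAt n F d e))}, HEq w w' →
    graftAt n F d (graft (subtreeAt n F d) e w) = graft F (graftAt n F d e) w'
  | 0, _, _, _, _, _, hw => by cases hw; rfl
  | _+1, _, Sum.inl _, _, _, _, hw => by cases hw; rfl
  | n+1, F, Sum.inr ⟨i, j⟩, e, _, w', hw => by
      have hcast : HEq w' (cast (congrArg (cofreeP p).dir
          (subtree_consDir F n i (graftAt n (branch F n i) j e))) w') := (cast_heq _ _).symm
      exact (congrArg (consDir F n i)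
          (graftAt_graft n (branch F n i) j e (hw.trans hcast))).trans
        (graft_consDir F n i (graftAt n (branch F n i) j e) hcast).symm

theorem cofree_hom_ext {X : PolyF} {F G : PolyFHom X (cofreeP p)}
    (h : ∀ n, F.comp (level p n) = G.comp (level p n)) : F = G := by
  obtain ⟨FP, FD⟩ := F; obtain ⟨GP, GD⟩ := G
  obtain rfl : FP = GP := funext fun x => Subtype.ext <| funext fun n =>
    PolyFHom.congr_onPos (h n) x
  simp only [PolyFHom.mk.injEq, heq_eq_eq, true_and]
  funext x e
  induction e using Quot.ind with
  | _ y => exact PolyFHom.congr_onDir (h y.1) x HEq.rfl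

theorem cofree_hcomp_onPos_ext {B X : PolyF} {F G : PolyFHom X (polyComp (cofreeP p) B)}
    (h : ∀ n, F.comp (hcomp (level p n) (PolyFHom.id B))
      = G.comp (hcomp (level p n) (PolyFHom.id B))) (x : X.pos) : F.onPos x = G.onPos x := by
  have hroot : (F.onPos x).1 = (G.onPos x).1 := Subtype.ext <| funext fun n =>
    congrArg Sigma.fst (PolyFHom.congr_onPos (h n) x)
  refine Sigma.ext hroot (Function.hfunext (congrArg (cofreeP p).dir hroot) fun e e' he => ?_)
  obtain rfl : cast (congrArg (cofreeP p).dir hroot) e = e' := cast_eq_iff_heq.mpr he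
  refine heq_of_eq ?_
  induction e using Quot.ind with
  | _ y =>
    obtain ⟨n, d⟩ := y
    rw [show (Quot.mk _ ⟨n, d⟩ : (cofreeP p).dir (F.onPos x).1)
        = (level p n).onDir (F.onPos x).1 d from rfl, cast_level_onDir hroot]
    exact Sigma.snd_apply_eq_of_eq (PolyFHom.congr_onPos (h n) x) d _ (cast_heq _ _).symm

theorem cofree_hcomp_hom_ext {B X : PolyF} {F G : PolyFHom X (polyComp (cofreeP p) B)}
    (h : ∀ n, F.comp (hcomp (level p n) (PolyFHom.id B))
      = G.comp (hcomp (level p n) (PolyFHom.id B))) : F = G := by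
  obtain ⟨FP, FD⟩ := F; obtain ⟨GP, GD⟩ := G
  obtain rfl : FP = GP := funext (cofree_hcomp_onPos_ext h)
  simp only [PolyFHom.mk.injEq, heq_eq_eq, true_and]
  funext x ⟨e, w⟩
  induction e using Quot.ind with
  | _ y => exact PolyFHom.congr_onDir (h y.1) x (d := ⟨y.2, w⟩) (d' := ⟨y.2, w⟩) HEq.rfl

theorem cofreeComul_coassoc_level (n : ℕ) :
    ((cofreeComul p).comp (hcomp (PolyFHom.id (cofreeP p)) (cofreeComul p))).comp
        (hcomp (level p n) (PolyFHom.id (polyComp (cofreeP p) (cofreeP p))))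
      = ((cofreeComul p).comp ((hcomp (cofreeComul p) (PolyFHom.id (cofreeP p))).comp
          (assocHom (cofreeP p) (cofreeP p) (cofreeP p)))).comp
        (hcomp (level p n) (PolyFHom.id (polyComp (cofreeP p) (cofreeP p)))) := by
  have hsub (F : (cofreeP p).pos) (d : (iter p n).dir (F.1 n)) :
      subtree (subtreeAt n F d) = fun e => subtree F (graftAt n F d e) :=
    funext fun e => (subtree_graftAt n F d e).symm
  have hpos (F : (cofreeP p).pos) :
      (⟨F.1 n, fun d => ⟨subtreeAt n F d, subtree (subtreeAt n F d)⟩⟩ :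
        (polyComp (iter p n) (polyComp (cofreeP p) (cofreeP p))).pos)
      = ⟨F.1 n, fun d => ⟨subtreeAt n F d, fun e => subtree F (graftAt n F d e)⟩⟩ :=
    congrArg (Sigma.mk (F.1 n)) (funext fun d => congrArg (Sigma.mk _) (hsub F d))
  refine PolyFHom.ext_heq hpos fun F ⟨d, e, w⟩ ⟨d', e', w'⟩ hdd => ?_
  obtain ⟨hd, hew⟩ := (polyComp_dir_heq_iff (hpos F) _ _).1 hdd
  obtain rfl : d = d' := eq_of_heq hd
  obtain ⟨he, hw⟩ := (polyComp_dir_heq_iff (congrArg (Sigma.mk _) (hsub F d)) _ _).1 hew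
  obtain rfl : e = e' := eq_of_heq he
  exact graftAt_graft n F d e hw

def cofreeComon (p : PolyF) : ComonoidStruct (cofreeP p) where
  counit := projZero p
  comul := cofreeComul p
  -- the empty path lives at level 0, where `subtreeAt` and `graftAt` are identities
  counit_left := rfl
  counit_right := by
    refine PolyFHom.ext_heq (fun _ => rfl) fun F d d' hd => ?_
    cases hd
    induction d using Quot.ind with
    | _ y => exact graftAt_root y.1 F y.2
  coassoc := cofree_hcomp_hom_ext cofreeComul_coassoc_level

end CofreeComonoid

namespace ComonoidStruct

variable {c : PolyF} (mc : ComonoidStruct c)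

/-- Reading the comonoid as a category, `mc.comul.onPos a = ⟨mc.base a, mc.cod a⟩`: `mc.base a`
is `a` itself, but only propositionally (`base_eq`), and `mc.cod a i` is the codomain of the
morphism `i`. -/
def base (a : c.pos) : c.pos := (mc.comul.onPos a).1

def cod (a : c.pos) (i : c.dir (mc.base a)) : c.pos := (mc.comul.onPos a).2 i

theorem base_eq (a : c.pos) : mc.base a = a :=
  PolyFHom.congr_onPos mc.counit_right a

theorem cod_counit (a : c.pos) : mc.cod a (mc.counit.onDir (mc.base a) PUnit.unit) = a :=
  PolyFHom.congr_onPos mc.counit_left a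

theorem comul_onDir_counit_left (a : c.pos)
    {X : c.dir (mc.cod a (mc.counit.onDir (mc.base a) PUnit.unit))} {Y : c.dir a} (h : HEq X Y) :
    mc.comul.onDir a ⟨mc.counit.onDir (mc.base a) PUnit.unit, X⟩ = Y :=
  PolyFHom.congr_onDir mc.counit_left a h

theorem comul_onDir_counit_right (a : c.pos) {X : c.dir (mc.base a)} {Y : c.dir a}
    (h : HEq X Y) : mc.comul.onDir a ⟨X, mc.counit.onDir (mc.cod a X) PUnit.unit⟩ = Y :=
  PolyFHom.congr_onDir mc.counit_right a h

theorem comul_onPos_coassoc (a : c.pos) :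
    (⟨mc.base a, fun i => mc.comul.onPos (mc.cod a i)⟩ :
        Σ x : c.pos, c.dir x → (polyComp c c).pos)
      = ⟨mc.base (mc.base a), fun i' => ⟨mc.cod (mc.base a) i',
          fun X' => mc.cod a (mc.comul.onDir (mc.base a) ⟨i', X'⟩)⟩⟩ :=
  PolyFHom.congr_onPos mc.coassoc a

theorem base_cod (a : c.pos) {i : c.dir (mc.base a)} {i' : c.dir (mc.base (mc.base a))}
    (hi : HEq i i') : mc.base (mc.cod a i) = mc.cod (mc.base a) i' :=
  congrArg Sigma.fst (Sigma.snd_apply_eq_of_eq (mc.comul_onPos_coassoc a) i i' hi)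

theorem cod_cod (a : c.pos) {i : c.dir (mc.base a)} {i' : c.dir (mc.base (mc.base a))}
    (hi : HEq i i') {X : c.dir (mc.base (mc.cod a i))} {X' : c.dir (mc.cod (mc.base a) i')}
    (hX : HEq X X') :
    mc.cod (mc.cod a i) X = mc.cod a (mc.comul.onDir (mc.base a) ⟨i', X'⟩) :=
  Sigma.snd_apply_eq_of_eq (Sigma.snd_apply_eq_of_eq (mc.comul_onPos_coassoc a) i i' hi) X X' hX

theorem comul_onDir_coassoc (a : c.pos) {i : c.dir (mc.base a)}
    {i' : c.dir (mc.base (mc.base a))} (hi : HEq i i')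
    {X : c.dir (mc.base (mc.cod a i))} {X' : c.dir (mc.cod (mc.base a) i')} (hX : HEq X X')
    {Y : c.dir (mc.cod (mc.cod a i) X)}
    {Y' : c.dir (mc.cod a (mc.comul.onDir (mc.base a) ⟨i', X'⟩))} (hY : HEq Y Y') :
    mc.comul.onDir a ⟨i, mc.comul.onDir (mc.cod a i) ⟨X, Y⟩⟩
      = mc.comul.onDir a ⟨mc.comul.onDir (mc.base a) ⟨i', X'⟩, Y'⟩ := by
  refine PolyFHom.congr_onDir mc.coassoc a (d := ⟨i, X, Y⟩) (d' := ⟨i', X', Y'⟩) ?_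
  refine (polyComp_dir_heq_iff (PolyFHom.congr_onPos mc.coassoc a) _ _).2 ⟨hi, ?_⟩
  exact (polyComp_dir_heq_iff (Sigma.snd_apply_eq_of_eq (mc.comul_onPos_coassoc a) i i' hi)
    _ _).2 ⟨hX, hY⟩

end ComonoidStruct

section Unfold

variable {p c : PolyF} (mc : ComonoidStruct c) (f : PolyFHom c p)

def unfoldLevel : ∀ n : ℕ, PolyFHom c (iter p n)
  | 0 => mc.counit
  | n+1 => pprodLift mc.counit (mc.comul.comp (hcomp f (unfoldLevel n)))

theorem unfoldLevel_succ_comp_projIter :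
    ∀ n : ℕ, (unfoldLevel mc f (n+1)).comp (projIter p n) = unfoldLevel mc f n
  | 0 => PolyFHom.ext_heq (fun _ => rfl) fun _ _ d' _ => by cases d'; rfl
  | n+1 => by
      show (pprodLift mc.counit (mc.comul.comp (hcomp f (unfoldLevel mc f (n+1))))).comp
          (prodMap (PolyFHom.id yPoly) (hcomp (PolyFHom.id p) (projIter p n))) = _
      rw [pprodLift_comp_prodMap]
      show pprodLift mc.counit
        (mc.comul.comp ((hcomp f (unfoldLevel mc f (n+1))).comp
          (hcomp (PolyFHom.id p) (projIter p n)))) = _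
      rw [hcomp_comp_hcomp, unfoldLevel_succ_comp_projIter n]
      rfl

def unfold : PolyFHom c (cofreeP p) where
  onPos a := ⟨fun n => (unfoldLevel mc f n).onPos a,
    fun n => PolyFHom.congr_onPos (unfoldLevel_succ_comp_projIter mc f n) a⟩
  onDir a := Quot.lift (fun x => (unfoldLevel mc f x.1).onDir a x.2) (by
    rintro ⟨n, d⟩ _ rfl
    exact (PolyFHom.congr_onDir (unfoldLevel_succ_comp_projIter mc f n) a (cast_heq _ _)).symm)

theorem unfold_comp_projZero : (unfold mc f).comp (projZero p) = mc.counit :=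
  PolyFHom.ext_heq (fun _ => rfl) fun _ _ d' _ => by cases d'; rfl

theorem unfold_comp_projP : (unfold mc f).comp (projP p) = f := by
  refine PolyFHom.ext_heq (fun a => congrArg f.onPos (mc.base_eq a)) fun a _ _ hd => ?_
  exact mc.comul_onDir_counit_right a
    (hcongr_dep (fun x (k : p.dir (f.onPos x)) => f.onDir x k) (mc.base_eq a) hd)

theorem unfoldLevel_onPos_base (n : ℕ) (a : c.pos) :
    (unfoldLevel mc f n).onPos a = (unfoldLevel mc f n).onPos (mc.base a) :=
  congrArg _ (mc.base_eq a).symm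

theorem subtreeAt_unfold : ∀ (m : ℕ) (a : c.pos) (d : (iter p m).dir ((unfoldLevel mc f m).onPos a))
    {d₂ : (iter p m).dir ((unfoldLevel mc f m).onPos (mc.base a))}, HEq d d₂ →
    subtreeAt m ((unfold mc f).onPos a) d
      = (unfold mc f).onPos (mc.cod a ((unfoldLevel mc f m).onDir (mc.base a) d₂))
  | 0, a, _, PUnit.unit, _ => (congrArg _ (mc.cod_counit a)).symm
  | m+1, a, Sum.inl _, _, hd => by
      obtain rfl := iter_succ_dir_heq_inl (unfoldLevel_onPos_base mc f (m+1) a) hd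
      exact (congrArg _ (mc.cod_counit a)).symm
  | m+1, a, Sum.inr ⟨i, j⟩, _, hd => by
      obtain ⟨i₂, j₂, rfl, hi, hj⟩ :=
        iter_succ_dir_heq_inr (unfoldLevel_onPos_base mc f (m+1) a) hd
      have hdc : HEq (f.onDir (mc.base a) i) (f.onDir (mc.base (mc.base a)) i₂) :=
        hcongr_dep (fun x (k : p.dir (f.onPos x)) => f.onDir x k) (mc.base_eq _).symm hi
      refine (subtreeAt_unfold m (mc.cod a (f.onDir (mc.base a) i)) j
        (d₂ := cast (congrArg (fun x => (iter p m).dir ((unfoldLevel mc f m).onPos x))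
          (mc.base_eq _).symm) j) (cast_heq _ _).symm).trans
        (congrArg _ (mc.cod_cod a hdc ?_))
      exact hcongr_dep (fun x (z : (iter p m).dir ((unfoldLevel mc f m).onPos x)) =>
        (unfoldLevel mc f m).onDir x z) (mc.base_cod a hdc) ((cast_heq _ _).trans hj)

theorem unfold_onDir_eq_comul_counit (a : c.pos) {w : (cofreeP p).dir ((unfold mc f).onPos a)}
    {w₂ : (cofreeP p).dir
      ((unfold mc f).onPos (mc.cod a (mc.counit.onDir (mc.base a) PUnit.unit)))}
    (hw : HEq w w₂) :
    (unfold mc f).onDir a w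
      = mc.comul.onDir a ⟨mc.counit.onDir (mc.base a) PUnit.unit, (unfold mc f).onDir _ w₂⟩ :=
  (mc.comul_onDir_counit_left a (hcongr_dep (fun x z => (unfold mc f).onDir x z)
    (mc.cod_counit a) hw.symm)).symm

theorem unfold_onDir_consDir (m : ℕ) (a : c.pos)
    (i : p.dir (((unfoldLevel mc f (m+1)).onPos a).2.1))
    (x : (cofreeP p).dir ((unfold mc f).onPos (mc.cod a (f.onDir (mc.base a) i)))) :
    (unfold mc f).onDir a (consDir ((unfold mc f).onPos a) m i x)
      = mc.comul.onDir a ⟨f.onDir (mc.base a) i,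
          (unfold mc f).onDir (mc.cod a (f.onDir (mc.base a) i)) x⟩ := by
  induction x using Quot.ind
  rfl

theorem unfold_onDir_graftAt : ∀ (m : ℕ) (a : c.pos)
    (d : (iter p m).dir ((unfoldLevel mc f m).onPos a))
    {d₂ : (iter p m).dir ((unfoldLevel mc f m).onPos (mc.base a))}, HEq d d₂ →
    ∀ {w : (cofreeP p).dir (subtreeAt m ((unfold mc f).onPos a) d)}
      {w₂ : (cofreeP p).dir
        ((unfold mc f).onPos (mc.cod a ((unfoldLevel mc f m).onDir (mc.base a) d₂)))}, HEq w w₂ →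
    (unfold mc f).onDir a (graftAt m ((unfold mc f).onPos a) d w)
      = mc.comul.onDir a ⟨(unfoldLevel mc f m).onDir (mc.base a) d₂,
          (unfold mc f).onDir (mc.cod a ((unfoldLevel mc f m).onDir (mc.base a) d₂)) w₂⟩
  | 0, a, _, PUnit.unit, _, _, _, hw => unfold_onDir_eq_comul_counit mc f a hw
  | m+1, a, Sum.inl _, _, hd, _, _, hw => by
      obtain rfl := iter_succ_dir_heq_inl (unfoldLevel_onPos_base mc f (m+1) a) hd
      exact unfold_onDir_eq_comul_counit mc f a hw
  | m+1, a, Sum.inr ⟨i, j⟩, _, hd, w, w₂, hw => by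
      obtain ⟨i₂, j₂, rfl, hi, hj⟩ :=
        iter_succ_dir_heq_inr (unfoldLevel_onPos_base mc f (m+1) a) hd
      have hdc : HEq (f.onDir (mc.base a) i) (f.onDir (mc.base (mc.base a)) i₂) :=
        hcongr_dep (fun x (k : p.dir (f.onPos x)) => f.onDir x k) (mc.base_eq _).symm hi
      have hj' : HEq j (cast (congrArg (fun x => (iter p m).dir ((unfoldLevel mc f m).onPos x))
          (mc.base_eq (mc.cod a (f.onDir (mc.base a) i))).symm) j) := (cast_heq _ _).symm
      have hX := hcongr_dep (fun x (z : (iter p m).dir ((unfoldLevel mc f m).onPos x)) =>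
        (unfoldLevel mc f m).onDir x z) (mc.base_cod a hdc) (hj'.symm.trans hj)
      have hw' : HEq w (cast (congrArg (cofreeP p).dir (subtreeAt_unfold mc f m _ j hj')) w) :=
        (cast_heq _ _).symm
      refine (unfold_onDir_consDir mc f m a i _).trans <|
        (congrArg (fun t => mc.comul.onDir a ⟨f.onDir (mc.base a) i, t⟩)
          (unfold_onDir_graftAt m _ j hj' hw')).trans ?_
      exact mc.comul_onDir_coassoc a hdc hX
        (hcongr_dep (fun x z => (unfold mc f).onDir x z) (mc.cod_cod a hdc hX) (hw'.symm.trans hw))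

theorem unfold_comp_splitAt (n : ℕ) :
    (unfold mc f).comp (splitAt p n)
      = mc.comul.comp (hcomp (unfoldLevel mc f n) (unfold mc f)) := by
  have hpos (a : c.pos) : ((unfold mc f).comp (splitAt p n)).onPos a
      = (mc.comul.comp (hcomp (unfoldLevel mc f n) (unfold mc f))).onPos a := by
    refine Sigma.ext (unfoldLevel_onPos_base mc f n a) ?_
    exact Function.hfunext (congrArg _ (unfoldLevel_onPos_base mc f n a)) fun d _ hd =>
      heq_of_eq (subtreeAt_unfold mc f n a d hd)
  refine PolyFHom.ext_heq hpos fun a dd dd' hdd => ?_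
  obtain ⟨hd, hw⟩ := (polyComp_dir_heq_iff (hpos a) dd dd').1 hdd
  exact unfold_onDir_graftAt mc f n a dd.1 hd hw

theorem unfold_comp_cofreeComul :
    (unfold mc f).comp (cofreeComul p) = mc.comul.comp (hcomp (unfold mc f) (unfold mc f)) :=
  cofree_hcomp_hom_ext fun n => unfold_comp_splitAt mc f n

theorem unfold_isComonHom : IsComonHom mc (cofreeComon p) (unfold mc f) :=
  ⟨unfold_comp_projZero mc f, unfold_comp_cofreeComul mc f⟩

end Unfold

section Uniqueness

variable {p : PolyF}

theorem level_zero : level p 0 = projZero p :=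
  PolyFHom.ext_heq (fun _ => rfl) fun _ d _ _ => by cases d; rfl

def cofreeDest (p : PolyF) : PolyFHom (cofreeP p) (polyComp p (cofreeP p)) :=
  (cofreeComul p).comp (hcomp (projP p) (PolyFHom.id (cofreeP p)))

theorem level_succ (n : ℕ) : level p (n+1)
    = pprodLift (projZero p) ((cofreeDest p).comp (hcomp (PolyFHom.id p) (level p n))) := by
  have hpos (F : (cofreeP p).pos) : (F.1 (n+1) : (iter p (n+1)).pos)
      = (PUnit.unit, ⟨(F.1 1).2.1,
          fun i => (F.1 (n+1)).2.2 (cast (congrArg p.dir (cofree_root_eq_root F 0 n)) i)⟩) :=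
    congrArg (Prod.mk PUnit.unit) (Sigma.mk_reindex (cofree_root_eq F n).symm (F.1 (n+1)).2.2)
  refine PolyFHom.ext_heq hpos fun F d d' hd => ?_
  obtain rfl : cast (congrArg (iter p (n+1)).dir (hpos F).symm) d' = d :=
    cast_eq_iff_heq.mpr hd.symm
  cases d' with
  | inl u =>
    erw [iter_cast_inl (hpos F).symm]
    exact level_onDir_rootDir F (n+1)
  | inr ij =>
    obtain ⟨i, j⟩ := ij
    erw [iter_cast_inr (hpos F).symm _ i j
      (congrArg (iter p n).dir (Sigma.snd_apply_eq_of_eq (congrArg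
        (fun z : (iter p (n+1)).pos => z.2) (hpos F).symm) i _ (cast_heq _ _).symm))]
    rfl

theorem level_comp_eq_unfoldLevel {c : PolyF} (mc : ComonoidStruct c) (f : PolyFHom c p)
    (g : PolyFHom c (cofreeP p)) (hg : IsComonHom mc (cofreeComon p) g)
    (hgf : g.comp (projP p) = f) : ∀ n : ℕ, g.comp (level p n) = unfoldLevel mc f n
  | 0 => by rw [level_zero]; exact hg.1
  | n+1 => by
      have hcounit : g.comp (projZero p) = mc.counit := hg.1
      have hcomul : g.comp (cofreeComul p) = mc.comul.comp (hcomp g g) := hg.2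
      refine (congrArg g.comp (level_succ n)).trans ((comp_pprodLift _ _ _).trans ?_)
      show pprodLift (g.comp (projZero p)) (((g.comp (cofreeComul p)).comp
          (hcomp (projP p) (PolyFHom.id (cofreeP p)))).comp (hcomp (PolyFHom.id p) (level p n)))
        = pprodLift mc.counit (mc.comul.comp (hcomp f (unfoldLevel mc f n)))
      rw [hcounit, hcomul, ← level_comp_eq_unfoldLevel mc f g hg hgf n, ← hgf]
      rfl

end Uniqueness

/-- The cofree comonoid `c⁀p` is right adjoint to the forgetful functor
from comonoids to `Poly`: it carries a comonoid structure whose counit-of-adjunction is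
the projection `c⁀p → p` (through `p⁽¹⁾ = y × p`), couniversal in the sense that every
polynomial map from (the carrier of) a comonoid `c` to `p` factors uniquely through a
comonoid homomorphism `c → c⁀p`. -/
theorem cofree_right_adjoint (p : PolyF) :
    ∃ M : ComonoidStruct (cofreeP p),
      M.counit = projZero p ∧
      ∀ (c : PolyF) (mc : ComonoidStruct c) (f : PolyFHom c p),
        ∃! g : PolyFHom c (cofreeP p), IsComonHom mc M g ∧ g.comp (projP p) = f := by
  refine ⟨cofreeComon p, rfl, fun c mc f => ⟨unfold mc f, ⟨unfold_isComonHom mc f,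
    unfold_comp_projP mc f⟩, fun g ⟨hg, hgf⟩ => ?_⟩⟩
  exact cofree_hom_ext fun n => level_comp_eq_unfoldLevel mc f g hg hgf n
end

section
/- Let c, d be polynomial comonoids and (s, φ) a (c,d)-effects handler, i.e. a polynomial s with a morphism φ: s ◁ d → c ◁ s commuting with counits and comultiplications (ε_c ◁ s) ∘ φ = s ◁ ε_d and (c ◁ φ) ∘ (φ ◁ d) ∘ (s ◁ δ_d) = (δ_c ◁ s) ∘ φ. Then the polynomial s ◁ d with left coaction (φ ◁ d) ∘ (s ◁ δ_d): s ◁ d → c ◁ s ◁ d and right coaction s ◁ δ_d: s ◁ d → s ◁ d ◁ d is a (c,d)-bicomodule: both coactions are counital and coassociative and they commute with each other. -/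
/-- For comonoids `c, d` and a `(c,d)`-effects handler `(s, φ)`, the
polynomial `s ◁ d` with left coaction `(φ ◁ d) ∘ (s ◁ δ_d)` and right coaction
`s ◁ δ_d` is a `(c,d)`-bicomodule: both coactions are counital and coassociative and
they commute with each other. -/
theorem handler_bicomodule {c d : PolyF} (mc : ComonoidStruct c) (md : ComonoidStruct d)
    (s : PolyF) (φ : PolyFHom (polyComp s d) (polyComp c s))
    (hφ : IsHandler mc md s φ) :
    ((handlerCoactL md s φ).comp
        ((hcomp mc.counit (PolyFHom.id (polyComp s d))).comp (lunitor (polyComp s d)))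
      = PolyFHom.id (polyComp s d)) ∧
    ((handlerCoactL md s φ).comp (hcomp (PolyFHom.id c) (handlerCoactL md s φ))
      = (handlerCoactL md s φ).comp
          ((hcomp mc.comul (PolyFHom.id (polyComp s d))).comp (assocHom c c (polyComp s d)))) ∧
    ((handlerCoactR md s).comp
        ((hcomp (PolyFHom.id (polyComp s d)) md.counit).comp (runitor (polyComp s d)))
      = PolyFHom.id (polyComp s d)) ∧
    ((handlerCoactR md s).comp (hcomp (PolyFHom.id (polyComp s d)) md.comul)
      = (handlerCoactR md s).comp
          ((hcomp (handlerCoactR md s) (PolyFHom.id d)).comp (assocHom (polyComp s d) d d))) ∧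
    ((handlerCoactL md s φ).comp (hcomp (PolyFHom.id c) (handlerCoactR md s))
      = (handlerCoactR md s).comp
          ((hcomp (handlerCoactL md s φ) (PolyFHom.id d)).comp
            (assocHom c (polyComp s d) d))) := by
  refine ⟨?_, ?_, ?_, ?_, ?_⟩
  · -- counit L
    have h := congrArg (fun ψ : PolyFHom (polyComp s d) s =>
      (hcomp (PolyFHom.id s) md.comul).comp ((assocInv s d d).comp
        (hcomp ψ (PolyFHom.id d)))) hφ.1
    have h2 := congrArg (fun ψ : PolyFHom d d => hcomp (PolyFHom.id s) ψ) md.counit_left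
    exact h.trans h2
  · -- coassoc L
    have h2 := congrArg (fun ψ : PolyFHom (polyComp s d) (polyComp c (polyComp c s)) =>
      (hcomp (PolyFHom.id s) md.comul).comp ((assocInv s d d).comp
        ((hcomp ψ (PolyFHom.id d)).comp ((assocHom c (polyComp c s) d).comp
          (hcomp (PolyFHom.id c) (assocHom c s d)))))) hφ.2
    have h1 := congrArg (fun ψ : PolyFHom d (polyComp d (polyComp d d)) =>
      (hcomp (PolyFHom.id s) ψ).comp ((assocInv s d (polyComp d d)).comp
        ((hcomp φ (PolyFHom.id (polyComp d d))).comp ((assocHom c s (polyComp d d)).comp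
          (hcomp (PolyFHom.id c) ((assocInv s d d).comp
            ((hcomp φ (PolyFHom.id d)).comp (assocHom c s d)))))))) md.coassoc
    exact h1.trans h2
  · -- counit R
    exact congrArg (fun ψ : PolyFHom d d => hcomp (PolyFHom.id s) ψ) md.counit_right
  · -- coassoc R
    exact congrArg (fun ψ : PolyFHom d (polyComp d (polyComp d d)) =>
      (hcomp (PolyFHom.id s) ψ).comp (assocInv s d (polyComp d d))) md.coassoc
  · -- compat
    exact congrArg (fun ψ : PolyFHom d (polyComp d (polyComp d d)) =>
      (hcomp (PolyFHom.id s) ψ).comp ((assocInv s d (polyComp d d)).comp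
        ((hcomp φ (PolyFHom.id (polyComp d d))).comp ((assocHom c s (polyComp d d)).comp
          (hcomp (PolyFHom.id c) (assocInv s d d)))))) md.coassoc
end

section
/- Let e be a comonoid in Poly and c a comonoid equipped with the structure making e a (c,c)-bicomodule that is a comonoid for the composition ◁_c of bicomodules over c. Then the carrier polynomial e forms a comonoid in (Poly, y, ◁) equipped with a comonoid homomorphism (cofunctor) e → c. -/
/-- If a `(c,c)`-bicomodule `E` carries the structure of a comonoid for
the composition `◁_c` of bicomodules over `c` (with counit `εe : E → c` and
comultiplication `δe` valued in a witness `B` of the composite `E ◁_c E`, both maps of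
bicomodules), then the carrier polynomial `E` itself is a `◁`-comonoid in `Poly`,
equipped with a comonoid homomorphism (cofunctor) to `c`, given by `εe`. -/
theorem comonad_gives_comonoid {c : PolyF} (mc : ComonoidStruct c)
    (E : Bicomod c c mc mc) (B : Bicomod c c mc mc) (W : CompositeWitness E E B)
    (εe : PolyFHom E.carrier c) (δe : PolyFHom E.carrier B.carrier)
    (hεL : E.coactL.comp (hcomp (PolyFHom.id c) εe) = εe.comp mc.comul)
    (hεR : E.coactR.comp (hcomp εe (PolyFHom.id c)) = εe.comp mc.comul)
    (hδL : E.coactL.comp (hcomp (PolyFHom.id c) δe) = δe.comp B.coactL)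
    (hδR : E.coactR.comp (hcomp δe (PolyFHom.id c)) = δe.comp B.coactR)
    (hcounitL : δe.comp (W.incl.comp (hcomp εe (PolyFHom.id E.carrier))) = E.coactL)
    (hcounitR : δe.comp (W.incl.comp (hcomp (PolyFHom.id E.carrier) εe)) = E.coactR)
    (hcoassoc : δe.comp (W.incl.comp ((hcomp δe (PolyFHom.id E.carrier)).comp
        ((hcomp W.incl (PolyFHom.id E.carrier)).comp
          (assocHom E.carrier E.carrier E.carrier))))
      = δe.comp (W.incl.comp (hcomp (PolyFHom.id E.carrier) (δe.comp W.incl)))) :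
    ∃ me : ComonoidStruct E.carrier,
      me.counit = εe.comp mc.counit ∧
      me.comul = δe.comp W.incl ∧
      IsComonHom me mc εe := by
  refine ⟨{
    counit := εe.comp mc.counit
    comul := δe.comp W.incl
    counit_left := ?_
    counit_right := ?_
    coassoc := ?_ }, rfl, rfl, rfl, ?_⟩
  · show (δe.comp (W.incl.comp (hcomp εe (PolyFHom.id E.carrier)))).comp
      ((hcomp mc.counit (PolyFHom.id E.carrier)).comp (lunitor E.carrier))
      = PolyFHom.id E.carrier
    rw [hcounitL]; exact E.counitL
  · show (δe.comp (W.incl.comp (hcomp (PolyFHom.id E.carrier) εe))).comp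
      ((hcomp (PolyFHom.id E.carrier) mc.counit).comp (runitor E.carrier))
      = PolyFHom.id E.carrier
    rw [hcounitR]; exact E.counitR
  · exact hcoassoc.symm
  · show εe.comp mc.comul
      = (δe.comp (W.incl.comp (hcomp εe (PolyFHom.id E.carrier)))).comp
        (hcomp (PolyFHom.id c) εe)
    rw [hcounitL]; exact hεL.symm
end

section
/- For any polynomial p and any polynomial comonoid (c, ε, δ), there is a bijection between: (1) effects handlers with source comonoid the cofree comonoid c⁀p, i.e. polynomial morphisms c⁀p ◁ s ← s ◁ c commuting with counits and comultiplications, and (2) elementary (p,c)-effects handlers, i.e. arbitrary polynomial morphisms p ◁ s ← s ◁ c. One direction composes with the projection c⁀p → p; the inverse is constructed by induction using the limit presentation c⁀p ◁ s ≅ lim_i (p⁽ⁱ⁾ ◁ s). -/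
/-!
A position of `c⁀p` is a compatible family of depth-`n` trees, so a map into `c⁀p ◁ X` is
determined by its components at every depth. Depth `n + 1` is recovered from depth `n` through
`out : c⁀p → p ◁ c⁀p`, hence a map `F` with `F ; (out ◁ X) = λ ; (p ◁ F)` is determined by the
`p`-coalgebra `λ` and its depth-`0` part. Coassociativity and the right counit law of the
explicit cofree comonoid have this shape, as does the comultiplication law of a handler
`Ψ : s ◁ c → c⁀p ◁ s`, with `λ` built from the elementary handler `Ψ ; (projP ◁ s)` and the
comultiplication of `c`: so `Ψ` is determined by its elementary part, and unfolding `λ`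
produces a handler from any elementary one. A comonoid structure with the couniversal property
is a retract of the explicit one through comonoid morphisms over `p`, which transports the
bijection.
-/

namespace PolyFHom

theorem hext {P Q : PolyF} {F G : PolyFHom P Q} (hpos : ∀ a, F.onPos a = G.onPos a)
    (hdir : ∀ a (d : Q.dir (G.onPos a)),
      F.onDir a (cast (congrArg Q.dir (hpos a)).symm d) = G.onDir a d) : F = G := by
  obtain ⟨Fp, Fd⟩ := F
  obtain ⟨Gp, Gd⟩ := G
  obtain rfl : Fp = Gp := funext hpos
  obtain rfl : Fd = Gd := funext fun a => funext fun d => hdir a d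
  rfl

theorem congr_onPos_s17 {P Q : PolyF} {F G : PolyFHom P Q} (h : F = G) (a : P.pos) :
    F.onPos a = G.onPos a := by
  rw [h]

theorem congr_onDir_s17 {P Q : PolyF} {F G : PolyFHom P Q} (h : F = G) (a : P.pos)
    (d : Q.dir (G.onPos a)) :
    F.onDir a (cast (congrArg Q.dir (congr_onPos_s17 h a)).symm d) = G.onDir a d := by
  subst h
  rfl

end PolyFHom

theorem sigma_mk_eq_of_cast {α Z : Type} {β : α → Type} {a a' : α} (h : a = a')
    {k : β a → Z} {k' : β a' → Z} (hk : ∀ i, k (cast (congrArg β h).symm i) = k' i) :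
    (⟨a, k⟩ : Σ x, (β x → Z)) = ⟨a', k'⟩ := by
  subst h
  exact congrArg _ (funext hk)

theorem polyComp_dir_cast {A B : PolyF} {x y : (polyComp A B).pos} (h : x = y)
    (i : A.dir y.1) (j : B.dir (y.2 i)) :
    cast (congrArg (polyComp A B).dir h).symm ⟨i, j⟩
      = ⟨cast (congrArg (fun z : (polyComp A B).pos => A.dir z.1) h).symm i,
         cast (by subst h; rfl) j⟩ := by
  subst h
  rfl

theorem IsComonHom.id {e : PolyF} (m : ComonoidStruct e) : IsComonHom m m (PolyFHom.id e) :=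
  ⟨rfl, rfl⟩

theorem IsComonHom.comp {e₁ e₂ e₃ : PolyF} {m₁ : ComonoidStruct e₁} {m₂ : ComonoidStruct e₂}
    {m₃ : ComonoidStruct e₃} {g : PolyFHom e₁ e₂} {h : PolyFHom e₂ e₃}
    (hg : IsComonHom m₁ m₂ g) (hh : IsComonHom m₂ m₃ h) : IsComonHom m₁ m₃ (g.comp h) :=
  ⟨(congrArg g.comp hh.1).trans hg.1,
   (congrArg g.comp hh.2).trans (congrArg (·.comp (hcomp h h)) hg.2)⟩

theorem IsHandler.map {e₁ e₂ c s : PolyF} {m₁ : ComonoidStruct e₁} {m₂ : ComonoidStruct e₂}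
    {mc : ComonoidStruct c} {Ψ : PolyFHom (polyComp s c) (polyComp e₁ s)}
    (h : IsHandler m₁ mc s Ψ) {w : PolyFHom e₁ e₂} (hw : IsComonHom m₁ m₂ w) :
    IsHandler m₂ mc s (Ψ.comp (hcomp w (PolyFHom.id s))) := by
  constructor
  · show Ψ.comp ((hcomp (w.comp m₂.counit) (PolyFHom.id s)).comp (lunitor s)) = _
    rw [hw.1]
    exact h.1
  · show _ = (Ψ.comp (hcomp (w.comp m₂.comul) (PolyFHom.id s))).comp (assocHom e₂ e₂ s)
    rw [hw.2]
    exact congrArg (·.comp (hcomp w (hcomp w (PolyFHom.id s)))) h.2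

def pprodFst (a b : PolyF) : PolyFHom (pprod a b) a := ⟨Prod.fst, fun _ d => Sum.inl d⟩

def pprodSnd (a b : PolyF) : PolyFHom (pprod a b) b := ⟨Prod.snd, fun _ d => Sum.inr d⟩

theorem pprod_comp_pos_ext {a b s : PolyF} (u v : (polyComp (pprod a b) s).pos)
    (h₁ : (⟨u.1.1, fun d => u.2 (Sum.inl d)⟩ : (polyComp a s).pos)
        = ⟨v.1.1, fun d => v.2 (Sum.inl d)⟩)
    (h₂ : (⟨u.1.2, fun d => u.2 (Sum.inr d)⟩ : (polyComp b s).pos)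
        = ⟨v.1.2, fun d => v.2 (Sum.inr d)⟩) : u = v := by
  obtain ⟨⟨x, y⟩, g⟩ := u
  obtain ⟨⟨x', y'⟩, g'⟩ := v
  obtain ⟨rfl, hl⟩ := Sigma.mk.inj_iff.mp h₁
  obtain ⟨rfl, hr⟩ := Sigma.mk.inj_iff.mp h₂
  obtain rfl : g = g' := funext fun
    | .inl d => congrFun (eq_of_heq hl) d
    | .inr d => congrFun (eq_of_heq hr) d
  rfl

theorem pprod_hom_ext {X a b s : PolyF} {F G : PolyFHom X (polyComp (pprod a b) s)}
    (h₁ : F.comp (hcomp (pprodFst a b) (PolyFHom.id s))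
      = G.comp (hcomp (pprodFst a b) (PolyFHom.id s)))
    (h₂ : F.comp (hcomp (pprodSnd a b) (PolyFHom.id s))
      = G.comp (hcomp (pprodSnd a b) (PolyFHom.id s))) : F = G := by
  obtain ⟨Fp, Fd⟩ := F
  obtain ⟨Gp, Gd⟩ := G
  obtain rfl : Fp = Gp := funext fun x =>
    pprod_comp_pos_ext _ _ (PolyFHom.congr_onPos_s17 h₁ x) (PolyFHom.congr_onPos_s17 h₂ x)
  obtain rfl : Fd = Gd := funext fun x => funext fun
    | ⟨.inl d, j⟩ => PolyFHom.congr_onDir_s17 h₁ x ⟨d, j⟩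
    | ⟨.inr d, j⟩ => PolyFHom.congr_onDir_s17 h₂ x ⟨d, j⟩
  rfl

namespace Cofree

variable {p : PolyF}

theorem iter_dir_cast_inl {n : ℕ} {x y : (iter p (n+1)).pos} (h : x = y) (u : PUnit) :
    cast (congrArg (iter p (n+1)).dir h) (Sum.inl u) = Sum.inl u := by
  subst h
  rfl

theorem iter_dir_cast_inr {n : ℕ} {x y : (iter p (n+1)).pos} (h : x = y) (i : p.dir x.2.1)
    (d : (iter p n).dir (x.2.2 i)) :
    cast (congrArg (iter p (n+1)).dir h) (Sum.inr ⟨i, d⟩)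
      = Sum.inr ⟨cast (congrArg (fun z : (iter p (n+1)).pos => p.dir z.2.1) h) i,
          cast (by subst h; rfl) d⟩ := by
  subst h
  rfl

def proj (p : PolyF) (n : ℕ) : PolyFHom (cofreeP p) (iter p n) :=
  ⟨fun f => f.1 n, fun _ d => Quot.mk _ ⟨n, d⟩⟩

theorem comp_pos_ext {s : PolyF} (u v : (polyComp (cofreeP p) s).pos)
    (h : ∀ n, (⟨u.1.1 n, fun d => u.2 (Quot.mk _ ⟨n, d⟩)⟩ : (polyComp (iter p n) s).pos)
      = ⟨v.1.1 n, fun d => v.2 (Quot.mk _ ⟨n, d⟩)⟩) : u = v := by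
  obtain ⟨⟨f, hf⟩, g⟩ := u
  obtain ⟨⟨f', hf'⟩, g'⟩ := v
  obtain rfl : f = f' := funext fun n => congrArg Sigma.fst (h n)
  obtain rfl : g = g' := funext <| Quot.ind fun ⟨n, d⟩ =>
    congrFun (eq_of_heq (Sigma.mk.inj_iff.mp (h n)).2) d
  rfl

theorem hom_ext {X s : PolyF} {F G : PolyFHom X (polyComp (cofreeP p) s)}
    (h : ∀ n, F.comp (hcomp (proj p n) (PolyFHom.id s))
      = G.comp (hcomp (proj p n) (PolyFHom.id s))) : F = G := by
  obtain ⟨Fp, Fd⟩ := F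
  obtain ⟨Gp, Gd⟩ := G
  obtain rfl : Fp = Gp := funext fun x =>
    comp_pos_ext _ _ fun n => PolyFHom.congr_onPos_s17 (h n) x
  obtain rfl : Fd = Gd := by
    funext x ⟨q, j⟩
    induction q using Quot.ind with
    | mk nd => exact PolyFHom.congr_onDir_s17 (h nd.1) x ⟨nd.2, j⟩
  rfl

section Unfold

variable {W : PolyF} (lam : PolyFHom W (polyComp p W))

def unfoldLevel : ∀ n : ℕ, W.pos → (iter p n).pos
  | 0, _ => PUnit.unit
  | n+1, w => ⟨PUnit.unit, (lam.onPos w).1, fun i => unfoldLevel n ((lam.onPos w).2 i)⟩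

theorem projIter_unfoldLevel :
    ∀ (n : ℕ) (w : W.pos), (projIter p n).onPos (unfoldLevel lam (n+1) w) = unfoldLevel lam n w
  | 0, _ => rfl
  | n+1, w => congrArg (fun k => (⟨PUnit.unit, (lam.onPos w).1, k⟩ : (iter p (n+1)).pos))
      (funext fun i => projIter_unfoldLevel n ((lam.onPos w).2 i))

/-- Following a direction of the depth-`n` unfolding of `w` leads to a state `w'`; directions
at `w'` are pulled back along that path to directions at `w`. -/
def unfoldDir :
    ∀ (n : ℕ) (w : W.pos), (iter p n).dir (unfoldLevel lam n w) → Σ w' : W.pos, (W.dir w' → W.dir w)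
  | 0, w, _ => ⟨w, id⟩
  | _+1, w, .inl _ => ⟨w, id⟩
  | n+1, w, .inr ⟨i, d⟩ =>
      ⟨(unfoldDir n ((lam.onPos w).2 i) d).1,
       fun e => lam.onDir w ⟨i, (unfoldDir n ((lam.onPos w).2 i) d).2 e⟩⟩

theorem unfoldDir_projIter :
    ∀ (n : ℕ) (w : W.pos) (d : (iter p n).dir (unfoldLevel lam n w)),
      unfoldDir lam (n+1) w ((projIter p n).onDir (unfoldLevel lam (n+1) w)
        (cast (congrArg (iter p n).dir (projIter_unfoldLevel lam n w).symm) d))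
      = unfoldDir lam n w d
  | 0, _, _ => rfl
  | n+1, w, .inl u => by
      rw [iter_dir_cast_inl (projIter_unfoldLevel lam (n+1) w).symm u]
      rfl
  | n+1, w, .inr ⟨i, d⟩ => by
      rw [iter_dir_cast_inr (projIter_unfoldLevel lam (n+1) w).symm i d]
      show (⟨_, fun e => lam.onDir w ⟨i, (unfoldDir lam (n+1) ((lam.onPos w).2 i)
          ((projIter p n).onDir (unfoldLevel lam (n+1) ((lam.onPos w).2 i)) (cast
            (congrArg (iter p n).dir (projIter_unfoldLevel lam n ((lam.onPos w).2 i)).symm)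
              d))).2 e⟩⟩ : Σ w' : W.pos, (W.dir w' → W.dir w)) = _
      rw [unfoldDir_projIter n ((lam.onPos w).2 i) d]
      rfl

def unfold (w : W.pos) : (cofreeP p).pos :=
  ⟨fun n => unfoldLevel lam n w, fun n => projIter_unfoldLevel lam n w⟩

def unfoldBack (w : W.pos) :
    (cofreeP p).dir (unfold lam w) → Σ w' : W.pos, (W.dir w' → W.dir w) :=
  Quot.lift (fun nd => unfoldDir lam nd.1 w nd.2) (by
    rintro ⟨n, d⟩ _ rfl
    exact (unfoldDir_projIter lam n w d).symm)

/-- The anamorphism of the `p`-coalgebra `lam`, remembering in the `W` component the state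
reached at the end of each path. -/
def ana : PolyFHom W (polyComp (cofreeP p) W) :=
  ⟨fun w => ⟨unfold lam w, fun q => (unfoldBack lam w q).1⟩,
   fun w d => (unfoldBack lam w d.1).2 d.2⟩

end Unfold

def root (f : (cofreeP p).pos) : p.pos := (f.1 1).2.1

theorem root_eq : ∀ (n : ℕ) (f : (cofreeP p).pos), (f.1 (n+1)).2.1 = root f
  | 0, _ => rfl
  | n+1, f => (congrArg (fun z : (iter p (n+1)).pos => z.2.1) (f.2 (n+1))).trans (root_eq n f)

def subtreeLevel (n : ℕ) (f : (cofreeP p).pos) (i : p.dir (root f)) : (iter p n).pos :=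
  (f.1 (n+1)).2.2 (cast (congrArg p.dir (root_eq n f)).symm i)

theorem iter_snd_snd_cast {n : ℕ} {x y : (iter p (n+1)).pos} (h : x = y) (i : p.dir y.2.1) :
    x.2.2 (cast (congrArg p.dir (congrArg (fun z : (iter p (n+1)).pos => z.2.1) h)).symm i)
      = y.2.2 i := by
  subst h
  rfl

theorem projIter_subtreeLevel (n : ℕ) (f : (cofreeP p).pos) (i : p.dir (root f)) :
    (projIter p n).onPos (subtreeLevel (n+1) f i) = subtreeLevel n f i := by
  rw [subtreeLevel, subtreeLevel,
    ← iter_snd_snd_cast (f.2 (n+1)) (cast (congrArg p.dir (root_eq n f)).symm i), cast_cast]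
  rfl

def subtree (f : (cofreeP p).pos) (i : p.dir (root f)) : (cofreeP p).pos :=
  ⟨fun n => subtreeLevel n f i, fun n => projIter_subtreeLevel n f i⟩

theorem iter_dir_inr_congr {m : ℕ} (x : (iter p (m+1+1)).pos) (T : Type) (j₁ j₂ : p.dir x.2.1)
    (h : j₁ = j₂) (c₁ : T = (iter p m).dir ((projIter p m).onPos (x.2.2 j₁)))
    (c₂ : T = (iter p m).dir ((projIter p m).onPos (x.2.2 j₂))) (d : T) :
    (Sum.inr ⟨j₁, (projIter p m).onDir (x.2.2 j₁) (cast c₁ d)⟩ : (iter p (m+1+1)).dir x)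
      = Sum.inr ⟨j₂, (projIter p m).onDir (x.2.2 j₂) (cast c₂ d)⟩ := by
  subst h
  rfl

theorem projIter_onDir_cast_inr {m : ℕ} (z : (iter p (m+1+1)).pos) {y : (iter p (m+1)).pos}
    (h : (projIter p (m+1)).onPos z = y) (i : p.dir y.2.1) (d : (iter p m).dir (y.2.2 i))
    (h₁ : p.dir y.2.1 = p.dir z.2.1)
    (h₂ : (iter p m).dir (y.2.2 i)
      = (iter p m).dir ((projIter p m).onPos (z.2.2 (cast h₁ i)))) :
    (projIter p (m+1)).onDir z (cast (congrArg (iter p (m+1)).dir h.symm) (Sum.inr ⟨i, d⟩))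
      = Sum.inr ⟨cast h₁ i, (projIter p m).onDir (z.2.2 (cast h₁ i)) (cast h₂ d)⟩ := by
  subst h
  rfl

/-- `c⁀p` as a `p`-coalgebra: a tree goes to its root label and the subtrees below it. -/
def out : PolyFHom (cofreeP p) (polyComp p (cofreeP p)) where
  onPos f := ⟨root f, subtree f⟩
  onDir f d := Quot.lift
    (fun me => Quot.mk _
      ⟨me.1 + 1, Sum.inr ⟨cast (congrArg p.dir (root_eq me.1 f)).symm d.1, me.2⟩⟩)
    (by
      rintro ⟨m, e⟩ _ rfl
      apply Quot.sound
      show (⟨m+1+1, _⟩ : Σ n : ℕ, (iter p n).dir (f.1 n)) = ⟨m+1+1, _⟩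
      rw [projIter_onDir_cast_inr (f.1 (m+1+1)) (f.2 (m+1))
        (cast (congrArg p.dir (root_eq m f)).symm d.1) e
        ((congrArg p.dir (root_eq m f)).trans (congrArg p.dir (root_eq (m+1) f)).symm)
        (congrArg (iter p m).dir (by rw [cast_cast]; exact (projIter_subtreeLevel m f d.1).symm))]
      exact congrArg (Sigma.mk (m+1+1)) (iter_dir_inr_congr (f.1 (m+1+1)) _ _ _
        (by rw [cast_cast]) _ _ e)) d.2

theorem proj_succ_comp_pprodSnd (n : ℕ) :
    (proj p (n+1)).comp (pprodSnd yPoly (polyComp p (iter p n)))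
      = out.comp (hcomp (PolyFHom.id p) (proj p n)) := by
  have hpos : ∀ f : (cofreeP p).pos,
      (f.1 (n+1)).2 = (⟨root f, fun i => subtreeLevel n f i⟩ : (polyComp p (iter p n)).pos) :=
    fun f => sigma_mk_eq_of_cast (root_eq n f) fun _ => rfl
  refine PolyFHom.hext hpos fun f ⟨i, d⟩ => ?_
  refine (congrArg _ (polyComp_dir_cast (hpos f) i d)).trans ?_
  exact congrArg (fun e => (Quot.mk _ ⟨n+1,
    Sum.inr ⟨cast (congrArg p.dir (root_eq n f)).symm i, e⟩⟩ : (cofreeP p).dir f)) (cast_eq _ d)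

theorem mk_succ_inl_eq_mk_zero (f : (cofreeP p).pos) :
    ∀ n, (Quot.mk _ ⟨n+1, Sum.inl PUnit.unit⟩ : (cofreeP p).dir f) = Quot.mk _ ⟨0, PUnit.unit⟩
  | 0 => (Quot.sound (f.2 0 ▸ rfl)).symm
  | n+1 => (Quot.sound (by
      show _ = (⟨n+1+1, _⟩ : Σ m, (iter p m).dir (f.1 m))
      rw [iter_dir_cast_inl (f.2 (n+1)).symm]
      rfl)).symm.trans (mk_succ_inl_eq_mk_zero f n)

theorem proj_succ_comp_pprodFst (n : ℕ) :
    (proj p (n+1)).comp (pprodFst yPoly (polyComp p (iter p n))) = projZero p :=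
  PolyFHom.hext (fun _ => rfl) fun f _ => mk_succ_inl_eq_mk_zero f n

theorem ana_out {W : PolyF} (lam : PolyFHom W (polyComp p W)) :
    (ana lam).comp (hcomp out (PolyFHom.id W))
      = (lam.comp (hcomp (PolyFHom.id p) (ana lam))).comp (assocInv p (cofreeP p) W) := by
  have hpos : ∀ w, ((ana lam).comp (hcomp out (PolyFHom.id W))).onPos w
      = ((lam.comp (hcomp (PolyFHom.id p) (ana lam))).comp (assocInv p (cofreeP p) W)).onPos w := by
    intro w
    refine Sigma.ext rfl (heq_of_eq (funext fun ⟨i, q⟩ => ?_))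
    induction q using Quot.ind
    rfl
  refine PolyFHom.hext hpos fun w ⟨⟨i, q⟩, j⟩ => ?_
  refine (congrArg _ (polyComp_dir_cast (hpos w) ⟨i, q⟩ j)).trans ?_
  induction q using Quot.ind
  rfl

/-- `F` unfolds the `p`-coalgebra `lam`, with depth-`0` part `η`. -/
def IsCorec {W X : PolyF} (lam : PolyFHom W (polyComp p W)) (η : PolyFHom W (polyComp yPoly X))
    (F : PolyFHom W (polyComp (cofreeP p) X)) : Prop :=
  F.comp (hcomp (projZero p) (PolyFHom.id X)) = η ∧
    F.comp (hcomp out (PolyFHom.id X))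
      = (lam.comp (hcomp (PolyFHom.id p) F)).comp (assocInv p (cofreeP p) X)

theorem IsCorec.unique {W X : PolyF} {lam : PolyFHom W (polyComp p W)}
    {η : PolyFHom W (polyComp yPoly X)} {F G : PolyFHom W (polyComp (cofreeP p) X)}
    (hF : IsCorec lam η F) (hG : IsCorec lam η G) : F = G := by
  refine hom_ext fun n => ?_
  induction n with
  | zero => exact hF.1.trans hG.1.symm
  | succ n ih =>
    refine pprod_hom_ext ?_ ?_
    · show F.comp (hcomp ((proj p (n+1)).comp (pprodFst _ _)) (PolyFHom.id X))
        = G.comp (hcomp ((proj p (n+1)).comp (pprodFst _ _)) (PolyFHom.id X))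
      rw [proj_succ_comp_pprodFst]
      exact hF.1.trans hG.1.symm
    · have hsnd : ∀ H : PolyFHom W (polyComp (cofreeP p) X), IsCorec lam η H →
          H.comp (hcomp ((proj p (n+1)).comp (pprodSnd _ _)) (PolyFHom.id X))
            = (lam.comp (hcomp (PolyFHom.id p) (H.comp (hcomp (proj p n) (PolyFHom.id X))))).comp
                (assocInv p (iter p n) X) := by
        intro H hH
        rw [proj_succ_comp_pprodSnd]
        exact congrArg (·.comp (hcomp (hcomp (PolyFHom.id p) (proj p n)) (PolyFHom.id X))) hH.2
      refine (hsnd F hF).trans ?_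
      rw [ih]
      exact (hsnd G hG).symm

theorem isCorec_ana {W : PolyF} (lam : PolyFHom W (polyComp p W)) :
    IsCorec lam (lunitorInv W) (ana lam) :=
  ⟨rfl, ana_out lam⟩

theorem IsCorec.postcomp {W X X' : PolyF} {lam : PolyFHom W (polyComp p W)}
    {η : PolyFHom W (polyComp yPoly X)} {F : PolyFHom W (polyComp (cofreeP p) X)}
    (hF : IsCorec lam η F) (g : PolyFHom X X') :
    IsCorec lam (η.comp (hcomp (PolyFHom.id yPoly) g)) (F.comp (hcomp (PolyFHom.id _) g)) :=
  ⟨congrArg (·.comp (hcomp (PolyFHom.id yPoly) g)) hF.1,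
   congrArg (·.comp (hcomp (PolyFHom.id (polyComp p (cofreeP p))) g)) hF.2⟩

theorem IsCorec.precomp {V W X : PolyF} {lam : PolyFHom W (polyComp p W)}
    {η : PolyFHom W (polyComp yPoly X)} {F : PolyFHom W (polyComp (cofreeP p) X)}
    (hF : IsCorec lam η F) {κ : PolyFHom V (polyComp p V)} {g : PolyFHom V W}
    (hg : g.comp lam = κ.comp (hcomp (PolyFHom.id p) g)) :
    IsCorec κ (g.comp η) (g.comp F) :=
  ⟨congrArg g.comp hF.1,
   (congrArg g.comp hF.2).trans
     (congrArg (·.comp ((hcomp (PolyFHom.id p) F).comp (assocInv p (cofreeP p) X))) hg)⟩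

def comul (p : PolyF) : PolyFHom (cofreeP p) (polyComp (cofreeP p) (cofreeP p)) := ana out

theorem comul_counit_right :
    (comul p).comp ((hcomp (PolyFHom.id (cofreeP p)) (projZero p)).comp (runitor (cofreeP p)))
      = PolyFHom.id (cofreeP p) :=
  congrArg (·.comp (runitor (cofreeP p)))
    (((isCorec_ana out).postcomp (projZero p)).unique (G := runitorInv (cofreeP p)) ⟨rfl, rfl⟩)

theorem comul_coassoc :
    (comul p).comp (hcomp (PolyFHom.id (cofreeP p)) (comul p))
      = (comul p).comp ((hcomp (comul p) (PolyFHom.id (cofreeP p))).comp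
          (assocHom (cofreeP p) (cofreeP p) (cofreeP p))) := by
  refine ((isCorec_ana out).postcomp (comul p)).unique ⟨rfl, ?_⟩
  calc ((comul p).comp ((hcomp (comul p) (PolyFHom.id (cofreeP p))).comp
          (assocHom (cofreeP p) (cofreeP p) (cofreeP p)))).comp
          (hcomp out (PolyFHom.id (polyComp (cofreeP p) (cofreeP p))))
      = ((comul p).comp (hcomp ((ana out).comp (hcomp out (PolyFHom.id (cofreeP p))))
          (PolyFHom.id (cofreeP p)))).comp
          (assocHom (polyComp p (cofreeP p)) (cofreeP p) (cofreeP p)) := rfl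
    _ = ((comul p).comp (hcomp out (PolyFHom.id (cofreeP p)))).comp
          ((hcomp (hcomp (PolyFHom.id p) (comul p)) (PolyFHom.id (cofreeP p))).comp
          ((hcomp (assocInv p (cofreeP p) (cofreeP p)) (PolyFHom.id (cofreeP p))).comp
          (assocHom (polyComp p (cofreeP p)) (cofreeP p) (cofreeP p)))) := by
        rw [ana_out]
        rfl
    _ = _ := by
        rw [comul, ana_out]
        rfl

def comonoid (p : PolyF) : ComonoidStruct (cofreeP p) :=
  ⟨projZero p, comul p, rfl, comul_counit_right, comul_coassoc⟩

section Lift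

variable {c : PolyF} (mc : ComonoidStruct c) (f : PolyFHom c p)

def lift : PolyFHom c (cofreeP p) :=
  (ana (mc.comul.comp (hcomp f (PolyFHom.id c)))).comp
    ((hcomp (PolyFHom.id (cofreeP p)) mc.counit).comp (runitor (cofreeP p)))

theorem lift_comp_out :
    (lift mc f).comp out = (mc.comul.comp (hcomp f (PolyFHom.id c))).comp
      (hcomp (PolyFHom.id p) (lift mc f)) :=
  congrArg (·.comp ((hcomp (PolyFHom.id (polyComp p (cofreeP p))) mc.counit).comp
    (runitor (polyComp p (cofreeP p))))) (ana_out _)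

theorem lift_comp_projP : (lift mc f).comp (projP p) = f := by
  calc (lift mc f).comp (projP p)
      = ((lift mc f).comp out).comp
          ((hcomp (PolyFHom.id p) (projZero p)).comp (runitor p)) := rfl
    _ = (mc.comul.comp ((hcomp (PolyFHom.id c) mc.counit).comp (runitor c))).comp f := by
        rw [lift_comp_out]
        rfl
    _ = f := by
        rw [mc.counit_right]
        rfl

theorem lift_comp_comul :
    (lift mc f).comp (comul p) = mc.comul.comp (hcomp (lift mc f) (lift mc f)) := by
  refine ((isCorec_ana out).precomp (lift_comp_out mc f)).unique ⟨?_, ?_⟩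
  · calc (mc.comul.comp (hcomp (lift mc f) (lift mc f))).comp
          (hcomp (projZero p) (PolyFHom.id (cofreeP p)))
        = (mc.comul.comp (hcomp mc.counit (PolyFHom.id c))).comp
            (hcomp (PolyFHom.id yPoly) (lift mc f)) := rfl
      _ = _ := by
        rw [show mc.comul.comp (hcomp mc.counit (PolyFHom.id c)) = lunitorInv c from
          congrArg (·.comp (lunitorInv c)) mc.counit_left]
        rfl
  · calc (mc.comul.comp (hcomp (lift mc f) (lift mc f))).comp
          (hcomp out (PolyFHom.id (cofreeP p)))
        = mc.comul.comp (hcomp ((lift mc f).comp out) (lift mc f)) := rfl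
      _ = (mc.comul.comp ((hcomp mc.comul (PolyFHom.id c)).comp (assocHom c c c))).comp
            ((assocInv c c c).comp ((hcomp (hcomp f (PolyFHom.id c)) (PolyFHom.id c)).comp
              (hcomp (hcomp (PolyFHom.id p) (lift mc f)) (lift mc f)))) := by
        rw [lift_comp_out]
        rfl
      _ = _ := by
        rw [← mc.coassoc]
        rfl

theorem isComonHom_lift : IsComonHom mc (comonoid p) (lift mc f) :=
  ⟨rfl, lift_comp_comul mc f⟩

end Lift

section Handler

variable {c : PolyF} (mc : ComonoidStruct c) (s : PolyF)

def handlerOf (φ : PolyFHom (polyComp s c) (polyComp p s)) :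
    PolyFHom (polyComp s c) (polyComp (cofreeP p) s) :=
  (ana (handlerCoactL mc s φ)).comp
    (hcomp (PolyFHom.id (cofreeP p)) ((hcomp (PolyFHom.id s) mc.counit).comp (runitor s)))

variable {mc s}

theorem isCorec_handlerOf (φ : PolyFHom (polyComp s c) (polyComp p s)) :
    IsCorec (handlerCoactL mc s φ)
      (((hcomp (PolyFHom.id s) mc.counit).comp (runitor s)).comp (lunitorInv s))
      (handlerOf mc s φ) :=
  (isCorec_ana _).postcomp _

theorem handlerOf_comp_projP (φ : PolyFHom (polyComp s c) (polyComp p s)) :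
    (handlerOf mc s φ).comp (hcomp (projP p) (PolyFHom.id s)) = φ := by
  show (hcomp (PolyFHom.id s) (mc.comul.comp ((hcomp (PolyFHom.id c) mc.counit).comp
    (runitor c)))).comp φ = φ
  rw [mc.counit_right]
  rfl

theorem handlerCoact_compat (φ : PolyFHom (polyComp s c) (polyComp p s)) :
    (handlerCoactR mc s).comp ((hcomp (handlerCoactL mc s φ) (PolyFHom.id c)).comp
      (assocHom p (polyComp s c) c))
    = (handlerCoactL mc s φ).comp (hcomp (PolyFHom.id p) (handlerCoactR mc s)) := by
  show (hcomp (PolyFHom.id s) (mc.comul.comp ((hcomp mc.comul (PolyFHom.id c)).comp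
      (assocHom c c c)))).comp
      ((assocInv s c (polyComp c c)).comp ((hcomp φ (PolyFHom.id (polyComp c c))).comp
        ((assocHom p s (polyComp c c)).comp (hcomp (PolyFHom.id p) (assocInv s c c)))))
    = _
  rw [← mc.coassoc]
  rfl

theorem isHandler_handlerOf (φ : PolyFHom (polyComp s c) (polyComp p s)) :
    IsHandler (comonoid p) mc s (handlerOf mc s φ) := by
  refine ⟨rfl, IsCorec.unique (lam := handlerCoactL mc s φ)
    (η := (lunitorInv (polyComp s c)).comp (hcomp (PolyFHom.id yPoly) (handlerOf mc s φ)))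
    ⟨?_, ?_⟩ ⟨rfl, ?_⟩⟩
  · show (lunitorInv (polyComp s c)).comp (hcomp (PolyFHom.id yPoly)
      ((hcomp (PolyFHom.id s) (mc.comul.comp ((hcomp mc.counit (PolyFHom.id c)).comp
        (lunitor c)))).comp (handlerOf mc s φ))) = _
    rw [mc.counit_left]
    rfl
  · calc _ = (handlerCoactR mc s).comp ((hcomp ((handlerOf mc s φ).comp
            (hcomp out (PolyFHom.id s))) (PolyFHom.id c)).comp
            ((assocHom (polyComp p (cofreeP p)) s c).comp
              (hcomp (PolyFHom.id (polyComp p (cofreeP p))) (handlerOf mc s φ)))) := rfl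
      _ = ((handlerCoactR mc s).comp ((hcomp (handlerCoactL mc s φ) (PolyFHom.id c)).comp
            (assocHom p (polyComp s c) c))).comp
            ((hcomp (PolyFHom.id p) ((hcomp (handlerOf mc s φ) (PolyFHom.id c)).comp
              ((assocHom (cofreeP p) s c).comp
                (hcomp (PolyFHom.id (cofreeP p)) (handlerOf mc s φ))))).comp
              (assocInv p (cofreeP p) (polyComp (cofreeP p) s))) := by
          rw [(isCorec_handlerOf φ).2]
          rfl
      _ = _ := by
          rw [handlerCoact_compat]
          rfl
  · calc _ = ((handlerOf mc s φ).comp (hcomp ((comul p).comp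
            (hcomp out (PolyFHom.id (cofreeP p)))) (PolyFHom.id s))).comp
            (assocHom (polyComp p (cofreeP p)) (cofreeP p) s) := rfl
      _ = ((handlerOf mc s φ).comp (hcomp out (PolyFHom.id s))).comp
            ((hcomp (hcomp (PolyFHom.id p) (comul p)) (PolyFHom.id s)).comp
              ((hcomp (assocInv p (cofreeP p) (cofreeP p)) (PolyFHom.id s)).comp
                (assocHom (polyComp p (cofreeP p)) (cofreeP p) s))) := by
          rw [comul, ana_out]
          rfl
      _ = _ := by
          rw [(isCorec_handlerOf φ).2]
          rfl

end Handler

end Cofree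

section Handler

variable {p c : PolyF} {mc : ComonoidStruct c} {s : PolyF}

theorem IsHandler.eq_handlerOf {Ψ : PolyFHom (polyComp s c) (polyComp (cofreeP p) s)}
    (h : IsHandler (Cofree.comonoid p) mc s Ψ) :
    Ψ = Cofree.handlerOf mc s (Ψ.comp (hcomp (projP p) (PolyFHom.id s))) :=
  Cofree.IsCorec.unique ⟨congrArg (·.comp (lunitorInv s)) h.1,
    (congrArg (·.comp ((hcomp (projP p) (PolyFHom.id _)).comp (assocInv p (cofreeP p) s)))
      h.2).symm⟩
    (Cofree.isCorec_handlerOf _)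

theorem IsHandler.handlerOf_comp_of_retract {e : PolyF} {me : ComonoidStruct e}
    {π : PolyFHom e p} {v : PolyFHom e (cofreeP p)} {u : PolyFHom (cofreeP p) e}
    (hv : IsComonHom me (Cofree.comonoid p) v) (hvπ : v.comp (projP p) = π)
    (hvu : v.comp u = PolyFHom.id e) {Ψ : PolyFHom (polyComp s c) (polyComp e s)}
    (h : IsHandler me mc s Ψ) :
    (Cofree.handlerOf mc s (Ψ.comp (hcomp π (PolyFHom.id s)))).comp (hcomp u (PolyFHom.id s))
      = Ψ := by
  have hΨ : Cofree.handlerOf mc s (Ψ.comp (hcomp π (PolyFHom.id s)))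
      = Ψ.comp (hcomp v (PolyFHom.id s)) := by
    rw [(h.map hv).eq_handlerOf, ← hvπ]
    rfl
  rw [hΨ]
  show Ψ.comp (hcomp (v.comp u) (PolyFHom.id s)) = Ψ
  rw [hvu]
  rfl

end Handler

/-- For a polynomial `p` and a comonoid `(c, mc)`, effects handlers whose
source comonoid is the cofree comonoid `c⁀p` (with its couniversal comonoid structure)
are in bijection with elementary `(p,c)`-effects handlers, the bijection being given by
composition with the projection `c⁀p → p`. -/
theorem cofree_handlers_bijection (p : PolyF) (M : ComonoidStruct (cofreeP p))
    (hM : ∀ (c0 : PolyF) (m0 : ComonoidStruct c0) (f : PolyFHom c0 p),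
      ∃! g : PolyFHom c0 (cofreeP p), IsComonHom m0 M g ∧ g.comp (projP p) = f)
    (c : PolyF) (mc : ComonoidStruct c) (s : PolyF) :
    ∃ E : {Φ : PolyFHom (polyComp s c) (polyComp (cofreeP p) s) // IsHandler M mc s Φ}
        ≃ PolyFHom (polyComp s c) (polyComp p s),
      ∀ Φ, E Φ = Φ.val.comp (hcomp (projP p) (PolyFHom.id s)) := by
  obtain ⟨u, ⟨hu, hu_proj⟩, -⟩ := hM (cofreeP p) (Cofree.comonoid p) (projP p)
  have hv := Cofree.isComonHom_lift M (projP p)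
  have hv_proj := Cofree.lift_comp_projP M (projP p)
  have hvu : (Cofree.lift M (projP p)).comp u = PolyFHom.id (cofreeP p) :=
    (hM (cofreeP p) M (projP p)).unique
      ⟨hv.comp hu, (congrArg (Cofree.lift M (projP p)).comp hu_proj).trans hv_proj⟩
      ⟨IsComonHom.id M, rfl⟩
  exact ⟨{ toFun := fun Ψ => Ψ.1.comp (hcomp (projP p) (PolyFHom.id s))
           invFun := fun φ => ⟨(Cofree.handlerOf mc s φ).comp (hcomp u (PolyFHom.id s)),
             (Cofree.isHandler_handlerOf φ).map hu⟩
           left_inv := fun Ψ => Subtype.ext (Ψ.2.handlerOf_comp_of_retract hv hv_proj hvu)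
           right_inv := fun φ => (congrArg (fun g => (Cofree.handlerOf mc s φ).comp
             (hcomp g (PolyFHom.id s))) hu_proj).trans (Cofree.handlerOf_comp_projP φ) },
    fun _ => rfl⟩
end
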